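/- arXiv:0802.2024 — 14 statements merged into one kernel-verified Lean document; each statement's English description precedes it below -/
import Mathlib

section
/- Mass conservation law for the prion system. Fix t ≥ 0 and suppose: V is differentiable at t with V'(t) = λ − γV(t) − V(t)∫₀^∞ τ(x)u(x,t)dx; u(·,t) ≥ 0 satisfies the polymer equation pointwise on (0,∞), namely ∂ₜu(x,t) = −V(t)·∂ₓ(τ(x)u(x,t)) − (μ(x)+β(x))u(x,t) + 2∫ₓ^∞ β(y)κ(x,y)u(y,t)dy; the functions x↦x·u(x,t), x↦x·μ(x)u(x,t), x↦x·β(x)u(x,t), x↦τ(x)u(x,t) and x↦x·∂ₓ(τu)(x,t) are integrable on (0,∞); x·τ(x)u(x,t) → 0 as x→0⁺ and as x→∞; (x,y) ↦ x·β(y)κ(x,y)u(y,t) is integrable on the region {0 < x < y}; and s ↦ P(s) := ∫₀^∞ x u(x,s)dx is differentiable at t with derivative ∫₀^∞ x·∂ₜu(x,t)dx. Then d/dt (V(t) + P(t)) = λ − γV(t) − ∫₀^∞ μ(x)·x·u(x,t)dx. -/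
open MeasureTheory Set Filter Topology

/-!
Multiply the polymer equation by `x` and integrate over `(0, ∞)`. The transport term integrates
by parts to `V ∫ τ u`, cancelling the polymer-consumption term of the monomer equation (the
boundary terms vanish by the decay of `x τ u`). By Fubini and `∫₀^y x κ(x, y) dx = y / 2`, the
fragmentation gain `2 ∫ x ∫ₓ^∞ β κ u` equals the loss `∫ x β u`. Only the degradation term
`∫ x μ u` survives.
-/

section Fragmentation

variable {beta w : ℝ → ℝ} {kappa : ℝ → ℝ → ℝ}

lemma integrable_fragmentation_moment_prod (hsupp : ∀ x y, y ≤ x → kappa x y = 0)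
    (hint : IntegrableOn (fun p : ℝ × ℝ => p.1 * (beta p.2 * kappa p.1 p.2 * w p.2))
      {p | 0 < p.1 ∧ p.1 < p.2}) :
    Integrable (fun p : ℝ × ℝ => p.1 * (beta p.2 * kappa p.1 p.2 * w p.2))
      ((volume.restrict (Ioi 0)).prod (volume.restrict (Ioi 0))) := by
  rw [Measure.prod_restrict, ← Measure.volume_eq_prod]
  refine hint.of_forall_sdiff_eq_zero (measurableSet_Ioi.prod measurableSet_Ioi) ?_
  rintro ⟨x, y⟩ ⟨⟨hx, -⟩, hxy⟩
  simp [hsupp x y (not_lt.mp fun h => hxy ⟨hx, h⟩)]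

lemma setIntegral_Ioi_fragmentation_moment_left (hsupp : ∀ x y, y ≤ x → kappa x y = 0)
    {x : ℝ} (hx : 0 < x) :
    ∫ y in Ioi 0, x * (beta y * kappa x y * w y) = x * ∫ y in Ioi x, beta y * kappa x y * w y := by
  rw [setIntegral_eq_of_subset_of_forall_sdiff_eq_zero measurableSet_Ioi (Ioi_subset_Ioi hx.le),
    integral_const_mul]
  rintro y ⟨-, hxy⟩
  simp [hsupp x y (not_lt.mp hxy)]

lemma setIntegral_Ioi_fragmentation_moment_right (hsupp : ∀ x y, y ≤ x → kappa x y = 0)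
    (hmom : ∀ y > 0, ∫ x in (0:ℝ)..y, x * kappa x y = y / 2) {y : ℝ} (hy : 0 < y) :
    ∫ x in Ioi 0, x * (beta y * kappa x y * w y) = y / 2 * (beta y * w y) := by
  rw [setIntegral_eq_of_subset_of_forall_sdiff_eq_zero measurableSet_Ioi Ioc_subset_Ioi_self]
  · calc ∫ x in Ioc 0 y, x * (beta y * kappa x y * w y)
        = beta y * w y * ∫ x in Ioc 0 y, x * kappa x y := by
          rw [← integral_const_mul]; congr 1; ext x; ring
      _ = y / 2 * (beta y * w y) := by
          rw [← intervalIntegral.integral_of_le hy.le, hmom y hy, mul_comm]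
  · rintro x ⟨hx, hxy⟩
    simp [hsupp x y (not_le.mp fun h => hxy ⟨hx, h⟩).le]

lemma integrableOn_Ioi_mul_fragmentation_gain (hsupp : ∀ x y, y ≤ x → kappa x y = 0)
    (hint : IntegrableOn (fun p : ℝ × ℝ => p.1 * (beta p.2 * kappa p.1 p.2 * w p.2))
      {p | 0 < p.1 ∧ p.1 < p.2}) :
    IntegrableOn (fun x => x * ∫ y in Ioi x, beta y * kappa x y * w y) (Ioi 0) := by
  have h : IntegrableOn (fun x => ∫ y in Ioi 0, x * (beta y * kappa x y * w y)) (Ioi 0) :=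
    (integrable_fragmentation_moment_prod hsupp hint).integral_prod_left
  exact h.congr_fun (fun _ hx => setIntegral_Ioi_fragmentation_moment_left hsupp hx)
    measurableSet_Ioi

theorem two_mul_integral_Ioi_mul_fragmentation_gain (hsupp : ∀ x y, y ≤ x → kappa x y = 0)
    (hmom : ∀ y > 0, ∫ x in (0:ℝ)..y, x * kappa x y = y / 2)
    (hint : IntegrableOn (fun p : ℝ × ℝ => p.1 * (beta p.2 * kappa p.1 p.2 * w p.2))
      {p | 0 < p.1 ∧ p.1 < p.2}) :
    2 * ∫ x in Ioi 0, x * ∫ y in Ioi x, beta y * kappa x y * w y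
      = ∫ x in Ioi 0, x * beta x * w x := by
  calc 2 * ∫ x in Ioi 0, x * ∫ y in Ioi x, beta y * kappa x y * w y
      = 2 * ∫ x in Ioi 0, ∫ y in Ioi 0, x * (beta y * kappa x y * w y) := by
        rw [setIntegral_congr_fun measurableSet_Ioi
          fun _ hx => setIntegral_Ioi_fragmentation_moment_left hsupp hx]
    _ = 2 * ∫ y in Ioi 0, ∫ x in Ioi 0, x * (beta y * kappa x y * w y) := by
        rw [integral_integral_swap (integrable_fragmentation_moment_prod hsupp hint)]
    _ = ∫ y in Ioi 0, y * beta y * w y := by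
        rw [setIntegral_congr_fun measurableSet_Ioi
          fun _ hy => setIntegral_Ioi_fragmentation_moment_right hsupp hmom hy,
          ← integral_const_mul]
        congr 1; ext y; ring

end Fragmentation

theorem mass_conservation_general
    (lam gam : ℝ)
    (tau mu beta : ℝ → ℝ) (kappa : ℝ → ℝ → ℝ)
    (hkap_supp : ∀ x y : ℝ, y ≤ x → kappa x y = 0)
    (hkap_mom : ∀ y > 0, ∫ x in (0:ℝ)..y, x * kappa x y = y / 2)
    (V : ℝ → ℝ) (u : ℝ → ℝ → ℝ) (t : ℝ)
    (ut Dx : ℝ → ℝ)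
    -- the monomer equation: V is differentiable at t with the prescribed derivative
    (hV : HasDerivAt V (lam - gam * V t - V t * ∫ x in Ioi (0:ℝ), tau x * u x t) t)
    -- Dx x is the spatial derivative of τ u(·,t) at x, ut x the time derivative of u(x,·) at t
    (hDx : ∀ x > 0, HasDerivAt (fun y => tau y * u y t) (Dx x) x)
    -- the polymer equation holds pointwise on (0,∞)
    (hpde : ∀ x > 0, ut x = -V t * Dx x - (mu x + beta x) * u x t
        + 2 * ∫ y in Ioi x, beta y * kappa x y * u y t)
    -- integrability hypotheses
    (hint_xmu : IntegrableOn (fun x => x * mu x * u x t) (Ioi 0))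
    (hint_xbeta : IntegrableOn (fun x => x * beta x * u x t) (Ioi 0))
    (hint_tau : IntegrableOn (fun x => tau x * u x t) (Ioi 0))
    (hint_xDx : IntegrableOn (fun x => x * Dx x) (Ioi 0))
    -- decay of x τ(x) u(x,t) at 0⁺ and at ∞
    (hlim0 : Tendsto (fun x => x * (tau x * u x t)) (nhdsWithin 0 (Ioi 0)) (nhds 0))
    (hlimtop : Tendsto (fun x => x * (tau x * u x t)) atTop (nhds 0))
    -- integrability of the fragmentation kernel term on the region {0 < x < y}
    (hint_frag : IntegrableOn
        (fun p : ℝ × ℝ => p.1 * (beta p.2 * kappa p.1 p.2 * u p.2 t))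
        {p : ℝ × ℝ | 0 < p.1 ∧ p.1 < p.2})
    -- P(s) = ∫ x u(x,s) dx is differentiable at t with derivative ∫ x ∂ₜu(x,t) dx
    (hP : HasDerivAt (fun s => ∫ x in Ioi (0:ℝ), x * u x s)
        (∫ x in Ioi (0:ℝ), x * ut x) t) :
    HasDerivAt (fun s => V s + ∫ x in Ioi (0:ℝ), x * u x s)
      (lam - gam * V t - ∫ x in Ioi (0:ℝ), mu x * x * u x t) t := by
  have hibp : ∫ x in Ioi 0, x * Dx x = -∫ x in Ioi 0, tau x * u x t := by
    simpa using integral_Ioi_mul_deriv_eq_deriv_mul (fun x _ => hasDerivAt_id x) hDx hint_xDx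
      (by simpa only [Pi.mul_def, one_mul] using hint_tau) hlim0 hlimtop
  have hgain := two_mul_integral_Ioi_mul_fragmentation_gain (w := fun y => u y t) hkap_supp hkap_mom
    hint_frag
  have hmoment : ∫ x in Ioi 0, x * ut x
      = V t * (∫ x in Ioi 0, tau x * u x t) - ∫ x in Ioi 0, x * mu x * u x t := by
    have hint_transport := hint_xDx.const_mul (-V t)
    have hint_gain := integrableOn_Ioi_mul_fragmentation_gain (w := fun y => u y t) hkap_supp
      hint_frag
    have hexp : ∀ x ∈ Ioi (0:ℝ), x * ut x
        = -V t * (x * Dx x) - x * mu x * u x t - x * beta x * u x t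
          + 2 * (x * ∫ y in Ioi x, beta y * kappa x y * u y t) := by
      intro x hx
      rw [hpde x hx]
      ring
    rw [setIntegral_congr_fun measurableSet_Ioi hexp, integral_add, integral_sub, integral_sub,
      integral_const_mul, integral_const_mul, hibp, hgain]
    · ring
    exacts [hint_transport, hint_xmu, hint_transport.sub hint_xmu, hint_xbeta,
      (hint_transport.sub hint_xmu).sub hint_xbeta, hint_gain.const_mul 2]
  have hmu : ∫ x in Ioi 0, mu x * x * u x t = ∫ x in Ioi 0, x * mu x * u x t := by
    simp only [mul_comm (mu _)]
  refine (hV.add hP).congr_deriv ?_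
  rw [hmoment, hmu]
  ring

/-- **Mass conservation law for the prion system** (equation (5) of the paper, with `x₀ = 0`):
if `V` solves the monomer equation at time `t` and `u(·,t)` solves the polymer equation
pointwise on `(0,∞)`, with suitable integrability, decay, and differentiation-under-the-
integral hypotheses, then `d/dt (V(t) + P(t)) = λ − γ V(t) − ∫ μ(x) x u(x,t) dx`, where
`P(t) = ∫ x u(x,t) dx`. -/
theorem mass_conservation
    (lam gam : ℝ) (hlam : 0 < lam) (hgam : 0 < gam)
    (tau mu beta : ℝ → ℝ) (kappa : ℝ → ℝ → ℝ)
    (htau_nn : ∀ x > 0, 0 ≤ tau x) (hmu_nn : ∀ x > 0, 0 ≤ mu x)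
    (hbeta_nn : ∀ x > 0, 0 ≤ beta x)
    (hkap_nn : ∀ x y : ℝ, 0 ≤ kappa x y)
    (hkap_supp : ∀ x y : ℝ, y ≤ x → kappa x y = 0)
    (hkap_mass : ∀ y > 0, ∫ x in (0:ℝ)..y, kappa x y = 1)
    (hkap_mom : ∀ y > 0, ∫ x in (0:ℝ)..y, x * kappa x y = y / 2)
    (V : ℝ → ℝ) (u : ℝ → ℝ → ℝ) (t : ℝ) (ht : 0 ≤ t)
    (ut Dx : ℝ → ℝ)
    -- nonnegativity of the polymer density at time t
    (hu_nn : ∀ x > 0, 0 ≤ u x t)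
    -- the monomer equation: V is differentiable at t with the prescribed derivative
    (hV : HasDerivAt V (lam - gam * V t - V t * ∫ x in Ioi (0:ℝ), tau x * u x t) t)
    -- Dx x is the spatial derivative of τ u(·,t) at x, ut x the time derivative of u(x,·) at t
    (hDx : ∀ x > 0, HasDerivAt (fun y => tau y * u y t) (Dx x) x)
    (hut : ∀ x > 0, HasDerivAt (fun s => u x s) (ut x) t)
    -- the polymer equation holds pointwise on (0,∞)
    (hpde : ∀ x > 0, ut x = -V t * Dx x - (mu x + beta x) * u x t
        + 2 * ∫ y in Ioi x, beta y * kappa x y * u y t)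
    -- integrability hypotheses
    (hint_xu : IntegrableOn (fun x => x * u x t) (Ioi 0))
    (hint_xmu : IntegrableOn (fun x => x * mu x * u x t) (Ioi 0))
    (hint_xbeta : IntegrableOn (fun x => x * beta x * u x t) (Ioi 0))
    (hint_tau : IntegrableOn (fun x => tau x * u x t) (Ioi 0))
    (hint_xDx : IntegrableOn (fun x => x * Dx x) (Ioi 0))
    -- decay of x τ(x) u(x,t) at 0⁺ and at ∞
    (hlim0 : Tendsto (fun x => x * (tau x * u x t)) (nhdsWithin 0 (Ioi 0)) (nhds 0))
    (hlimtop : Tendsto (fun x => x * (tau x * u x t)) atTop (nhds 0))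
    -- integrability of the fragmentation kernel term on the region {0 < x < y}
    (hint_frag : IntegrableOn
        (fun p : ℝ × ℝ => p.1 * (beta p.2 * kappa p.1 p.2 * u p.2 t))
        {p : ℝ × ℝ | 0 < p.1 ∧ p.1 < p.2})
    -- P(s) = ∫ x u(x,s) dx is differentiable at t with derivative ∫ x ∂ₜu(x,t) dx
    (hP : HasDerivAt (fun s => ∫ x in Ioi (0:ℝ), x * u x s)
        (∫ x in Ioi (0:ℝ), x * ut x) t) :
    HasDerivAt (fun s => V s + ∫ x in Ioi (0:ℝ), x * u x s)
      (lam - gam * V t - ∫ x in Ioi (0:ℝ), mu x * x * u x t) t :=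
  mass_conservation_general lam gam tau mu beta kappa hkap_supp hkap_mom V u t ut Dx hV hDx hpde
    hint_xmu hint_xbeta hint_tau hint_xDx hlim0 hlimtop hint_frag hP
end

section
/- Zeroth-moment identity for the eigenvalue problem. If U is a decaying eigenfunction with eigenvalue Λ for the parameter V, then Λ·∫₀^∞ U(x)dx = ∫₀^∞ (μ(x) − β(x))U(x)dx. -/
open MeasureTheory Set Filter Topology

/-- A *decaying eigenfunction* `U` (with `U'` the pointwise derivative of `τ U`) with
eigenvalue `Λ` for the parameter `V` of the prion growth-fragmentation operator:
`U ≥ 0`, `τ U` is differentiable on `(0,∞)` with derivative `U'`, the eigenvalue equation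
`V (τU)'(x) + (μ(x)+β(x)) U(x) − 2 ∫ₓ^∞ β(y) κ(x,y) U(y) dy = Λ U(x)` holds for `x > 0`,
the functions `U, xU, τU, μU, xμU, βU, xβU, (τU)'` are integrable on `(0,∞)`,
`β(y)κ(x,y)U(y)` and `x β(y)κ(x,y)U(y)` are integrable on `{0 < x < y}`, and
`τU → 0` at `0⁺`, `τU → 0` and `x τU → 0` at `∞`. -/
structure DecayingEigenfunction (V Lam : ℝ) (tau mu beta : ℝ → ℝ)
    (kappa : ℝ → ℝ → ℝ) (U U' : ℝ → ℝ) : Prop where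
  nonneg : ∀ x > 0, 0 ≤ U x
  hasDeriv : ∀ x > 0, HasDerivAt (fun y => tau y * U y) (U' x) x
  eigen : ∀ x > 0,
    V * U' x + (mu x + beta x) * U x - 2 * ∫ y in Ioi x, beta y * kappa x y * U y
      = Lam * U x
  int_U : IntegrableOn U (Ioi 0)
  int_xU : IntegrableOn (fun x => x * U x) (Ioi 0)
  int_tauU : IntegrableOn (fun x => tau x * U x) (Ioi 0)
  int_muU : IntegrableOn (fun x => mu x * U x) (Ioi 0)
  int_xmuU : IntegrableOn (fun x => x * mu x * U x) (Ioi 0)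
  int_betaU : IntegrableOn (fun x => beta x * U x) (Ioi 0)
  int_xbetaU : IntegrableOn (fun x => x * beta x * U x) (Ioi 0)
  int_U' : IntegrableOn U' (Ioi 0)
  int_frag : IntegrableOn (fun p : ℝ × ℝ => beta p.2 * kappa p.1 p.2 * U p.2)
      {p : ℝ × ℝ | 0 < p.1 ∧ p.1 < p.2}
  int_xfrag : IntegrableOn (fun p : ℝ × ℝ => p.1 * (beta p.2 * kappa p.1 p.2 * U p.2))
      {p : ℝ × ℝ | 0 < p.1 ∧ p.1 < p.2}
  lim_zero : Tendsto (fun x => tau x * U x) (nhdsWithin 0 (Ioi 0)) (nhds 0)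
  lim_top : Tendsto (fun x => tau x * U x) atTop (nhds 0)
  lim_xtop : Tendsto (fun x => x * (tau x * U x)) atTop (nhds 0)

/-- **Zeroth-moment identity for the eigenvalue problem**: integrating the eigenvalue
equation over `(0,∞)` gives `Λ ∫ U = ∫ (μ − β) U`. -/
theorem zeroth_moment_identity
    (V Lam : ℝ) (tau mu beta : ℝ → ℝ) (kappa : ℝ → ℝ → ℝ) (U U' : ℝ → ℝ)
    (htau_nn : ∀ x > 0, 0 ≤ tau x) (hmu_nn : ∀ x > 0, 0 ≤ mu x)
    (hbeta_nn : ∀ x > 0, 0 ≤ beta x)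
    (hkap_nn : ∀ x y : ℝ, 0 ≤ kappa x y)
    (hkap_supp : ∀ x y : ℝ, y ≤ x → kappa x y = 0)
    (hkap_mass : ∀ y > 0, ∫ x in (0:ℝ)..y, kappa x y = 1)
    (hkap_mom : ∀ y > 0, ∫ x in (0:ℝ)..y, x * kappa x y = y / 2)
    (hU : DecayingEigenfunction V Lam tau mu beta kappa U U') :
    Lam * ∫ x in Ioi (0:ℝ), U x = ∫ x in Ioi (0:ℝ), (mu x - beta x) * U x := by
  -- Part 1: ∫ U' = 0 via FTC with limits at both ends
  have hU'int : IntegrableOn U' (Ioi (0:ℝ)) := hU.int_U'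
  set F : ℝ → ℝ := fun x => if 0 < x then tau x * U x else 0 with hFdef
  have hF0 : F 0 = 0 := by simp [hFdef]
  have hFeq : ∀ x : ℝ, 0 < x → F x = tau x * U x := by
    intro x hx; simp [hFdef, hx]
  have hFcont : ContinuousWithinAt F (Ici 0) 0 := by
    rw [← continuousWithinAt_Ioi_iff_Ici]
    have h1 : Tendsto F (nhdsWithin 0 (Ioi 0)) (nhds 0) := by
      refine hU.lim_zero.congr' ?_
      filter_upwards [self_mem_nhdsWithin] with x hx
      exact (hFeq x hx).symm
    simpa [ContinuousWithinAt, hF0] using h1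
  have hFderiv : ∀ x ∈ Ioi (0:ℝ), HasDerivAt F (U' x) x := by
    intro x hx
    refine (hU.hasDeriv x hx).congr_of_eventuallyEq ?_
    filter_upwards [Ioi_mem_nhds hx] with y hy
    exact hFeq y hy
  have hFtop : Tendsto F atTop (nhds 0) := by
    refine hU.lim_top.congr' ?_
    filter_upwards [Ioi_mem_atTop (0:ℝ)] with x hx
    exact (hFeq x hx).symm
  have hU'zero : ∫ x in Ioi (0:ℝ), U' x = 0 := by
    rw [integral_Ioi_of_hasDerivAt_of_tendsto hFcont hFderiv hU'int hFtop, hF0, sub_zero]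
  -- Part 2: Fubini for the fragmentation term
  set S : Set (ℝ × ℝ) := {p | 0 < p.1 ∧ p.1 < p.2} with hSdef
  have hSmeas : MeasurableSet S :=
    ((isOpen_lt continuous_const continuous_fst).inter
      (isOpen_lt continuous_fst continuous_snd)).measurableSet
  set g : ℝ × ℝ → ℝ := fun p => beta p.2 * kappa p.1 p.2 * U p.2 with hgdef
  set f : ℝ × ℝ → ℝ := S.indicator g with hfdef
  have hf_int : Integrable f := (integrable_indicator_iff hSmeas).2 hU.int_frag
  have hf_int' : Integrable f ((volume : Measure ℝ).prod volume) := by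
    rwa [← Measure.volume_eq_prod]
  -- row function identification
  have hrow : (fun x : ℝ => ∫ y : ℝ, f (x, y)) =
      (Ioi (0:ℝ)).indicator (fun x => ∫ y in Ioi x, beta y * kappa x y * U y) := by
    funext x
    by_cases hx : 0 < x
    · rw [indicator_of_mem (show x ∈ Ioi (0:ℝ) from hx)]
      have h1 : (fun y : ℝ => f (x, y)) =
          (Ioi x).indicator (fun y => beta y * kappa x y * U y) := by
        funext y
        by_cases hy : x < y
        · rw [hfdef, indicator_of_mem (show (x, y) ∈ S from ⟨hx, hy⟩),
            indicator_of_mem (show y ∈ Ioi x from hy)]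
        · rw [hfdef, indicator_of_notMem (show (x, y) ∉ S from fun h => hy h.2),
            indicator_of_notMem (show y ∉ Ioi x from hy)]
      rw [h1, integral_indicator measurableSet_Ioi]
    · rw [indicator_of_notMem (show x ∉ Ioi (0:ℝ) from hx)]
      have h1 : (fun y : ℝ => f (x, y)) = fun _ => (0:ℝ) := by
        funext y
        exact indicator_of_notMem (show (x, y) ∉ S from fun h => hx h.1) _
      rw [h1, integral_zero]
  -- column function identification
  have hcol : (fun y : ℝ => ∫ x : ℝ, f (x, y)) =
      (Ioi (0:ℝ)).indicator (fun y => beta y * U y) := by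
    funext y
    by_cases hy : 0 < y
    · rw [indicator_of_mem (show y ∈ Ioi (0:ℝ) from hy)]
      have h1 : (fun x : ℝ => f (x, y)) =
          (Ioo 0 y).indicator (fun x => beta y * kappa x y * U y) := by
        funext x
        by_cases hx : 0 < x ∧ x < y
        · rw [hfdef, indicator_of_mem (show (x, y) ∈ S from hx),
            indicator_of_mem (show x ∈ Ioo 0 y from hx)]
        · rw [hfdef, indicator_of_notMem (show (x, y) ∉ S from hx),
            indicator_of_notMem (show x ∉ Ioo 0 y from fun h => hx ⟨h.1, h.2⟩)]
      rw [h1, integral_indicator measurableSet_Ioo]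
      have h2 : ∀ x : ℝ, beta y * kappa x y * U y = (beta y * U y) * kappa x y := by
        intro x; ring
      calc ∫ x in Ioo 0 y, beta y * kappa x y * U y
          = ∫ x in Ioo 0 y, (beta y * U y) * kappa x y := by
            exact integral_congr_ae (Eventually.of_forall fun x => h2 x)
        _ = (beta y * U y) * ∫ x in Ioo 0 y, kappa x y := integral_const_mul _ _
        _ = (beta y * U y) * 1 := by
            congr 1
            rw [← integral_Ioc_eq_integral_Ioo, ← intervalIntegral.integral_of_le hy.le]
            exact hkap_mass y hy
        _ = beta y * U y := mul_one _
    · rw [indicator_of_notMem (show y ∉ Ioi (0:ℝ) from hy)]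
      have h1 : (fun x : ℝ => f (x, y)) = fun _ => (0:ℝ) := by
        funext x
        exact indicator_of_notMem
          (show (x, y) ∉ S from fun h => hy (lt_trans h.1 h.2)) _
      rw [h1, integral_zero]
  have hswap : (∫ x : ℝ, ∫ y : ℝ, f (x, y)) = ∫ y : ℝ, ∫ x : ℝ, f (x, y) :=
    integral_integral_swap (f := fun x y => f (x, y)) hf_int'
  have hfrag_eq :
      (∫ x in Ioi (0:ℝ), ∫ y in Ioi x, beta y * kappa x y * U y)
        = ∫ y in Ioi (0:ℝ), beta y * U y := by
    have hL : (∫ x : ℝ, ∫ y : ℝ, f (x, y))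
        = ∫ x in Ioi (0:ℝ), ∫ y in Ioi x, beta y * kappa x y * U y := by
      rw [hrow, integral_indicator measurableSet_Ioi]
    have hR : (∫ y : ℝ, ∫ x : ℝ, f (x, y)) = ∫ y in Ioi (0:ℝ), beta y * U y := by
      rw [hcol, integral_indicator measurableSet_Ioi]
    rw [← hL, hswap, hR]
  -- integrability of the inner-integral function
  have hI_int : IntegrableOn (fun x => ∫ y in Ioi x, beta y * kappa x y * U y)
      (Ioi (0:ℝ)) := by
    have h1 : Integrable (fun x : ℝ => ∫ y : ℝ, f (x, y)) := by
      have := hf_int'.integral_prod_left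
      simpa using this
    rw [hrow] at h1
    exact (integrable_indicator_iff measurableSet_Ioi).1 h1
  -- Part 3: integrate the eigenvalue equation
  set I : ℝ → ℝ := fun x => ∫ y in Ioi x, beta y * kappa x y * U y with hIdef
  have hkey : ∫ x in Ioi (0:ℝ), (V * U' x + (mu x + beta x) * U x - 2 * I x)
      = ∫ x in Ioi (0:ℝ), Lam * U x :=
    setIntegral_congr_fun measurableSet_Ioi fun x hx => hU.eigen x hx
  have hint1 : IntegrableOn (fun x => V * U' x) (Ioi (0:ℝ)) := hU'int.const_mul V
  have hint2 : IntegrableOn (fun x => (mu x + beta x) * U x) (Ioi (0:ℝ)) := by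
    have : (fun x => (mu x + beta x) * U x) = fun x => mu x * U x + beta x * U x := by
      funext x; ring
    rw [this]; exact hU.int_muU.add hU.int_betaU
  have hint3 : IntegrableOn (fun x => 2 * I x) (Ioi (0:ℝ)) := hI_int.const_mul 2
  have hsplit : ∫ x in Ioi (0:ℝ), (V * U' x + (mu x + beta x) * U x - 2 * I x)
      = (∫ x in Ioi (0:ℝ), V * U' x) + (∫ x in Ioi (0:ℝ), (mu x + beta x) * U x)
        - ∫ x in Ioi (0:ℝ), 2 * I x := by
    have hint12 : IntegrableOn (fun x => V * U' x + (mu x + beta x) * U x) (Ioi (0:ℝ)) :=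
      hint1.add hint2
    rw [integral_sub hint12 hint3, integral_add hint1 hint2]
  have e1 : ∫ x in Ioi (0:ℝ), V * U' x = 0 := by
    rw [integral_const_mul, hU'zero, mul_zero]
  have e2 : ∫ x in Ioi (0:ℝ), (mu x + beta x) * U x
      = (∫ x in Ioi (0:ℝ), mu x * U x) + ∫ x in Ioi (0:ℝ), beta x * U x := by
    have : (fun x => (mu x + beta x) * U x) = fun x => mu x * U x + beta x * U x := by
      funext x; ring
    rw [this, integral_add hU.int_muU hU.int_betaU]
  have e3 : ∫ x in Ioi (0:ℝ), 2 * I x = 2 * ∫ x in Ioi (0:ℝ), beta x * U x := by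
    rw [integral_const_mul, hfrag_eq]
  have e4 : ∫ x in Ioi (0:ℝ), Lam * U x = Lam * ∫ x in Ioi (0:ℝ), U x :=
    integral_const_mul _ _
  have e5 : ∫ x in Ioi (0:ℝ), (mu x - beta x) * U x
      = (∫ x in Ioi (0:ℝ), mu x * U x) - ∫ x in Ioi (0:ℝ), beta x * U x := by
    have : (fun x => (mu x - beta x) * U x) = fun x => mu x * U x - beta x * U x := by
      funext x; ring
    rw [this, integral_sub hU.int_muU hU.int_betaU]
  rw [← e4, ← hkey, hsplit, e1, e2, e3, e5]
  ring
end

section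
/- First-moment identity for the eigenvalue problem. If U is a decaying eigenfunction with eigenvalue Λ for the parameter V, then Λ·∫₀^∞ x·U(x)dx = −V·∫₀^∞ τ(x)U(x)dx + ∫₀^∞ x·μ(x)U(x)dx. -/
open MeasureTheory Set Filter Topology

section Triangle

variable {E : Type*} [NormedAddCommGroup E] {G : ℝ × ℝ → E}

lemma indicator_triangle_eq_indicator_Ioi (x y : ℝ) :
    {p : ℝ × ℝ | 0 < p.1 ∧ p.1 < p.2}.indicator G (x, y)
      = (Ioi 0).indicator (fun x => (Ioi x).indicator (fun y => G (x, y)) y) x := by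
  by_cases hx : 0 < x <;> by_cases hy : x < y <;> simp [indicator_apply, hx, hy]

lemma indicator_triangle_eq_indicator_Ioo (x y : ℝ) :
    {p : ℝ × ℝ | 0 < p.1 ∧ p.1 < p.2}.indicator G (x, y)
      = (Ioi 0).indicator (fun y => (Ioo 0 y).indicator (fun x => G (x, y)) x) y := by
  by_cases hx : 0 < x <;> by_cases hy : x < y <;> simp [indicator_apply, hx, hy]
  exact fun hy0 => absurd (hx.trans hy) hy0.not_gt

lemma integrable_indicator_triangle (hG : IntegrableOn G {p : ℝ × ℝ | 0 < p.1 ∧ p.1 < p.2}) :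
    Integrable ({p : ℝ × ℝ | 0 < p.1 ∧ p.1 < p.2}.indicator G) (volume.prod volume) := by
  rw [← Measure.volume_eq_prod, integrable_indicator_iff]
  · exact hG
  · exact (measurableSet_lt measurable_const measurable_fst).inter
      (measurableSet_lt measurable_fst measurable_snd)

variable [NormedSpace ℝ E]

lemma integral_indicator_triangle_left (x : ℝ) :
    ∫ y, {p : ℝ × ℝ | 0 < p.1 ∧ p.1 < p.2}.indicator G (x, y)
      = (Ioi 0).indicator (fun x => ∫ y in Ioi x, G (x, y)) x := by
  simp_rw [indicator_triangle_eq_indicator_Ioi]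
  by_cases hx : 0 < x <;> simp [hx, integral_indicator measurableSet_Ioi]

lemma integral_indicator_triangle_right (y : ℝ) :
    ∫ x, {p : ℝ × ℝ | 0 < p.1 ∧ p.1 < p.2}.indicator G (x, y)
      = (Ioi 0).indicator (fun y => ∫ x in Ioo 0 y, G (x, y)) y := by
  simp_rw [indicator_triangle_eq_indicator_Ioo]
  by_cases hy : 0 < y <;> simp [hy, integral_indicator measurableSet_Ioo]

lemma integrableOn_integral_Ioi_of_integrableOn_triangle
    (hG : IntegrableOn G {p : ℝ × ℝ | 0 < p.1 ∧ p.1 < p.2}) :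
    IntegrableOn (fun x => ∫ y in Ioi x, G (x, y)) (Ioi 0) := by
  rw [← integrable_indicator_iff measurableSet_Ioi]
  simpa only [integral_indicator_triangle_left] using
    (integrable_indicator_triangle hG).integral_prod_left

lemma integral_Ioi_integral_Ioi_eq_integral_Ioi_integral_Ioo_of_integrableOn
    (hG : IntegrableOn G {p : ℝ × ℝ | 0 < p.1 ∧ p.1 < p.2}) :
    ∫ x in Ioi 0, ∫ y in Ioi x, G (x, y) = ∫ y in Ioi 0, ∫ x in Ioo 0 y, G (x, y) := by
  rw [← integral_indicator measurableSet_Ioi, ← integral_indicator measurableSet_Ioi]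
  simp_rw [← integral_indicator_triangle_left, ← integral_indicator_triangle_right]
  exact integral_integral_swap (integrable_indicator_triangle hG)

end Triangle

noncomputable def fragmentationGain (beta : ℝ → ℝ) (kappa : ℝ → ℝ → ℝ) (U : ℝ → ℝ) (x : ℝ) :
    ℝ :=
  ∫ y in Ioi x, beta y * kappa x y * U y

namespace DecayingEigenfunction

variable {V Lam : ℝ} {tau mu beta : ℝ → ℝ} {kappa : ℝ → ℝ → ℝ} {U U' : ℝ → ℝ}

lemma integrableOn_mul_fragmentationGain
    (hU : DecayingEigenfunction V Lam tau mu beta kappa U U') :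
    IntegrableOn (fun x => x * fragmentationGain beta kappa U x) (Ioi 0) := by
  simpa only [fragmentationGain, ← integral_const_mul] using
    integrableOn_integral_Ioi_of_integrableOn_triangle hU.int_xfrag

lemma two_mul_integral_mul_fragmentationGain
    (hkap_mom : ∀ y > 0, ∫ x in (0:ℝ)..y, x * kappa x y = y / 2)
    (hU : DecayingEigenfunction V Lam tau mu beta kappa U U') :
    2 * ∫ x in Ioi 0, x * fragmentationGain beta kappa U x
      = ∫ x in Ioi 0, x * beta x * U x := by
  calc 2 * ∫ x in Ioi 0, x * fragmentationGain beta kappa U x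
      = 2 * ∫ y in Ioi 0, ∫ x in Ioo 0 y, x * (beta y * kappa x y * U y) := by
        rw [← integral_Ioi_integral_Ioi_eq_integral_Ioi_integral_Ioo_of_integrableOn
          hU.int_xfrag]
        simp only [fragmentationGain, integral_const_mul]
    _ = ∫ y in Ioi 0, y * beta y * U y := by
        rw [← integral_const_mul]
        refine setIntegral_congr_fun measurableSet_Ioi fun y (hy : 0 < y) => ?_
        calc 2 * ∫ x in Ioo (0:ℝ) y, x * (beta y * kappa x y * U y)
            = 2 * (beta y * U y) * ∫ x in (0:ℝ)..y, x * kappa x y := by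
              rw [intervalIntegral.integral_of_le hy.le, integral_Ioc_eq_integral_Ioo,
                ← integral_const_mul, ← integral_const_mul]
              refine setIntegral_congr_fun measurableSet_Ioo fun x _ => ?_
              ring
          _ = y * beta y * U y := by rw [hkap_mom y hy]; ring

lemma const_mul_mul_deriv_eq (hU : DecayingEigenfunction V Lam tau mu beta kappa U U')
    {x : ℝ} (hx : 0 < x) :
    V * (x * U' x) = Lam * (x * U x) - x * mu x * U x - x * beta x * U x
      + 2 * (x * fragmentationGain beta kappa U x) := by
  rw [fragmentationGain]
  linear_combination x * hU.eigen x hx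

lemma integrableOn_const_mul_mul_deriv (hU : DecayingEigenfunction V Lam tau mu beta kappa U U') :
    IntegrableOn (fun x => V * (x * U' x)) (Ioi 0) := by
  refine IntegrableOn.congr_fun ?_ (fun x hx => (hU.const_mul_mul_deriv_eq hx).symm)
    measurableSet_Ioi
  exact (((hU.int_xU.const_mul Lam).sub hU.int_xmuU).sub hU.int_xbetaU).add
    (hU.integrableOn_mul_fragmentationGain.const_mul 2)

lemma integral_mul_deriv_eq_neg_integral (hU : DecayingEigenfunction V Lam tau mu beta kappa U U')
    (hint : IntegrableOn (fun x => x * U' x) (Ioi 0)) :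
    ∫ x in Ioi 0, x * U' x = -∫ x in Ioi 0, tau x * U x := by
  have hzero : Tendsto (fun x => x * (tau x * U x)) (𝓝[>] 0) (𝓝 0) := by
    simpa using (tendsto_nhdsWithin_of_tendsto_nhds tendsto_id).mul hU.lim_zero
  simpa using integral_Ioi_mul_deriv_eq_deriv_mul (u := id) (u' := fun _ => 1)
    (fun x _ => hasDerivAt_id x) (fun x hx => hU.hasDeriv x hx) hint
    (by simpa [Pi.mul_def] using hU.int_tauU) hzero hU.lim_xtop

lemma const_mul_integral_mul_deriv_eq (hU : DecayingEigenfunction V Lam tau mu beta kappa U U') :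
    V * ∫ x in Ioi 0, x * U' x = -V * ∫ x in Ioi 0, tau x * U x := by
  rcases eq_or_ne V 0 with rfl | hV
  · simp
  -- `x U'` is only known to be integrable through the eigenvalue equation, which needs `V ≠ 0`.
  have hint : IntegrableOn (fun x => x * U' x) (Ioi 0) :=
    (integrable_const_mul_iff hV.isUnit _).1 hU.integrableOn_const_mul_mul_deriv
  rw [hU.integral_mul_deriv_eq_neg_integral hint, mul_neg, neg_mul]

end DecayingEigenfunction

theorem first_moment_identity_general
    (V Lam : ℝ) (tau mu beta : ℝ → ℝ) (kappa : ℝ → ℝ → ℝ) (U U' : ℝ → ℝ)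
    (hkap_mom : ∀ y > 0, ∫ x in (0:ℝ)..y, x * kappa x y = y / 2)
    (hU : DecayingEigenfunction V Lam tau mu beta kappa U U') :
    Lam * ∫ x in Ioi (0:ℝ), x * U x
      = -V * (∫ x in Ioi (0:ℝ), tau x * U x) + ∫ x in Ioi (0:ℝ), x * mu x * U x := by
  have hbalance : ∀ x ∈ Ioi (0:ℝ), Lam * (x * U x) = V * (x * U' x) + x * mu x * U x
      + x * beta x * U x - 2 * (x * fragmentationGain beta kappa U x) := fun x hx => by
    linear_combination -hU.const_mul_mul_deriv_eq hx
  have htransport := hU.integrableOn_const_mul_mul_deriv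
  rw [← integral_const_mul, setIntegral_congr_fun measurableSet_Ioi hbalance,
    integral_sub (f := fun x => V * (x * U' x) + x * mu x * U x + x * beta x * U x)
      ((htransport.add hU.int_xmuU).add hU.int_xbetaU)
      (hU.integrableOn_mul_fragmentationGain.const_mul 2),
    integral_add (f := fun x => V * (x * U' x) + x * mu x * U x) (htransport.add hU.int_xmuU)
      hU.int_xbetaU,
    integral_add htransport hU.int_xmuU, integral_const_mul,
    integral_const_mul, hU.const_mul_integral_mul_deriv_eq,
    hU.two_mul_integral_mul_fragmentationGain hkap_mom]
  ring

/-- **First-moment identity for the eigenvalue problem**: integrating the eigenvalue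
equation against `x` over `(0,∞)` gives
`Λ ∫ x U = −V ∫ τ U + ∫ x μ U`. -/
theorem first_moment_identity
    (V Lam : ℝ) (tau mu beta : ℝ → ℝ) (kappa : ℝ → ℝ → ℝ) (U U' : ℝ → ℝ)
    (htau_nn : ∀ x > 0, 0 ≤ tau x) (hmu_nn : ∀ x > 0, 0 ≤ mu x)
    (hbeta_nn : ∀ x > 0, 0 ≤ beta x)
    (hkap_nn : ∀ x y : ℝ, 0 ≤ kappa x y)
    (hkap_supp : ∀ x y : ℝ, y ≤ x → kappa x y = 0)
    (hkap_mass : ∀ y > 0, ∫ x in (0:ℝ)..y, kappa x y = 1)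
    (hkap_mom : ∀ y > 0, ∫ x in (0:ℝ)..y, x * kappa x y = y / 2)
    (hU : DecayingEigenfunction V Lam tau mu beta kappa U U') :
    Lam * ∫ x in Ioi (0:ℝ), x * U x
      = -V * (∫ x in Ioi (0:ℝ), tau x * U x) + ∫ x in Ioi (0:ℝ), x * mu x * U x :=
  first_moment_identity_general V Lam tau mu beta kappa U U' hkap_mom hU
end

section
/- Location of the mean polymer size at the nonzero steady state. Let β₀ > 0, μ₀ ∈ ℝ, V ∈ ℝ, and suppose u∞ is a decaying eigenfunction with eigenvalue Λ = 0 for the parameter V, with constant degradation rate μ(x) ≡ μ₀ and linear fragmentation rate β(x) = β₀·x. If ∫₀^∞ u∞(x)dx > 0, then the mean size of polymers at the steady state equals μ₀/β₀, i.e. (∫₀^∞ x·u∞(x)dx)/(∫₀^∞ u∞(x)dx) = μ₀/β₀. -/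
open MeasureTheory Set Filter Topology

/-- **Location of the mean polymer size at the nonzero steady state**: the steady state
`u∞` is a decaying eigenfunction with eigenvalue `Λ = 0`; with constant degradation rate
`μ ≡ μ₀` and linear fragmentation rate `β(x) = β₀ x`, its mean size is `μ₀/β₀`. -/
theorem steady_state_mean_size
    (V beta0 mu0 : ℝ) (hbeta0 : 0 < beta0)
    (tau : ℝ → ℝ) (htau_nn : ∀ x > 0, 0 ≤ tau x)
    (kappa : ℝ → ℝ → ℝ) (uinf uinf' : ℝ → ℝ)
    (hkap_nn : ∀ x y : ℝ, 0 ≤ kappa x y)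
    (hkap_supp : ∀ x y : ℝ, y ≤ x → kappa x y = 0)
    (hkap_mass : ∀ y > 0, ∫ x in (0:ℝ)..y, kappa x y = 1)
    (hkap_mom : ∀ y > 0, ∫ x in (0:ℝ)..y, x * kappa x y = y / 2)
    (hU : DecayingEigenfunction V 0 tau (fun _ => mu0)
        (fun x => beta0 * x) kappa uinf uinf')
    (hpos : 0 < ∫ x in Ioi (0:ℝ), uinf x) :
    (∫ x in Ioi (0:ℝ), x * uinf x) / (∫ x in Ioi (0:ℝ), uinf x) = mu0 / beta0 := by
  set IU := ∫ x in Ioi (0:ℝ), uinf x with hIUdef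
  set IxU := ∫ x in Ioi (0:ℝ), x * uinf x with hIxUdef
  -- the fragmentation integrand and its region
  set S : Set (ℝ × ℝ) := {p : ℝ × ℝ | 0 < p.1 ∧ p.1 < p.2} with hSdef
  have hSmeas : MeasurableSet S :=
    (measurableSet_lt measurable_const measurable_fst).inter
      (measurableSet_lt measurable_fst measurable_snd)
  set f2 : ℝ → ℝ → ℝ := fun x y => beta0 * y * kappa x y * uinf y with hf2def
  set g : ℝ → ℝ → ℝ := fun x y => S.indicator (fun p : ℝ × ℝ => f2 p.1 p.2) (x, y) with hgdef
  -- Step 1: ∫ uinf' over (0,∞) is zero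
  have hF1cont : ContinuousAt (fun x => tau x * uinf x) 1 :=
    (hU.hasDeriv 1 one_pos).continuousAt
  have hI1 : ∫ x in Ioi (1:ℝ), uinf' x = 0 - tau 1 * uinf 1 :=
    MeasureTheory.integral_Ioi_of_hasDerivAt_of_tendsto
      hF1cont.continuousWithinAt
      (fun x hx => hU.hasDeriv x (lt_trans one_pos hx))
      (hU.int_U'.mono_set (Ioi_subset_Ioi zero_le_one)) hU.lim_top
  have hI2 : ∫ x in (0:ℝ)..1, uinf' x = tau 1 * uinf 1 - 0 := by
    refine intervalIntegral.integral_eq_sub_of_hasDerivAt_of_tendsto one_pos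
      (fun x hx => hU.hasDeriv x hx.1) ?_ hU.lim_zero
      (hF1cont.continuousWithinAt.tendsto)
    rw [intervalIntegrable_iff]
    exact hU.int_U'.mono_set (by rw [uIoc_of_le zero_le_one]; exact Ioc_subset_Ioi_self)
  have hIU' : ∫ x in Ioi (0:ℝ), uinf' x = 0 := by
    have hsplit : ∫ x in Ioi (0:ℝ), uinf' x
        = (∫ x in Ioc (0:ℝ) 1, uinf' x) + ∫ x in Ioi (1:ℝ), uinf' x := by
      rw [← Ioc_union_Ioi_eq_Ioi (zero_le_one : (0:ℝ) ≤ 1)]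
      exact setIntegral_union (Ioc_disjoint_Ioi le_rfl) measurableSet_Ioi
        (hU.int_U'.mono_set Ioc_subset_Ioi_self)
        (hU.int_U'.mono_set (Ioi_subset_Ioi zero_le_one))
    rw [hsplit, ← intervalIntegral.integral_of_le zero_le_one, hI2, hI1]
    ring
  -- Step 2: Fubini for the fragmentation term
  have hfrag : MeasureTheory.IntegrableOn (fun p : ℝ × ℝ => f2 p.1 p.2) S := hU.int_frag
  have hgInt : MeasureTheory.Integrable (fun p : ℝ × ℝ => g p.1 p.2) := by
    have : (fun p : ℝ × ℝ => g p.1 p.2)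
        = S.indicator (fun p : ℝ × ℝ => f2 p.1 p.2) := by
      funext p; simp [hgdef]
    rw [this]
    exact hfrag.integrable_indicator hSmeas
  have hswap : ∫ x, ∫ y, g x y = ∫ y, ∫ x, g x y := by
    have := MeasureTheory.integral_integral_swap (f := g)
      (μ := (volume : Measure ℝ)) (ν := (volume : Measure ℝ)) ?_
    · exact this
    · rw [← MeasureTheory.Measure.volume_eq_prod]
      exact hgInt
  -- LHS of hswap
  have hL : (fun x => ∫ y, g x y)
      = Set.indicator (Ioi (0:ℝ)) (fun x => ∫ y in Ioi x, f2 x y) := by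
    funext x
    by_cases hx : (0:ℝ) < x
    · rw [Set.indicator_of_mem (show x ∈ Ioi (0:ℝ) from hx)]
      have h1 : (fun y => g x y) = Set.indicator (Ioi x) (fun y => f2 x y) := by
        funext y
        by_cases hy : x < y
        · rw [Set.indicator_of_mem (show y ∈ Ioi x from hy)]
          exact Set.indicator_of_mem (show (x, y) ∈ S from ⟨hx, hy⟩) _
        · rw [Set.indicator_of_notMem (show y ∉ Ioi x from hy)]
          exact Set.indicator_of_notMem (fun h => hy h.2) _
      rw [h1, MeasureTheory.integral_indicator measurableSet_Ioi]
    · rw [Set.indicator_of_notMem (show x ∉ Ioi (0:ℝ) from hx)]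
      have h1 : (fun y => g x y) = fun _ => 0 := by
        funext y
        exact Set.indicator_of_notMem (fun h => hx h.1) _
      rw [h1, integral_zero]
  -- RHS of hswap
  have hR : (fun y => ∫ x, g x y)
      = Set.indicator (Ioi (0:ℝ)) (fun y => beta0 * (y * uinf y)) := by
    funext y
    by_cases hy : (0:ℝ) < y
    · rw [Set.indicator_of_mem (show y ∈ Ioi (0:ℝ) from hy)]
      have h1 : (fun x => g x y) = Set.indicator (Ioo 0 y) (fun x => f2 x y) := by
        funext x
        by_cases hx : x ∈ Ioo (0:ℝ) y
        · rw [Set.indicator_of_mem hx]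
          exact Set.indicator_of_mem (show (x, y) ∈ S from ⟨hx.1, hx.2⟩) _
        · rw [Set.indicator_of_notMem hx]
          exact Set.indicator_of_notMem (fun h => hx ⟨h.1, h.2⟩) _
      rw [h1, MeasureTheory.integral_indicator measurableSet_Ioo]
      have h2 : ∀ x, f2 x y = (beta0 * (y * uinf y)) * kappa x y := fun x => by
        simp only [hf2def]; ring
      simp_rw [h2, MeasureTheory.integral_const_mul]
      rw [← MeasureTheory.integral_Ioc_eq_integral_Ioo,
        ← intervalIntegral.integral_of_le hy.le, hkap_mass y hy, mul_one]
    · rw [Set.indicator_of_notMem (show y ∉ Ioi (0:ℝ) from hy)]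
      have h1 : (fun x => g x y) = fun _ => 0 := by
        funext x
        exact Set.indicator_of_notMem (fun h => hy (lt_trans h.1 h.2)) _
      rw [h1, integral_zero]
  have hA : ∫ x in Ioi (0:ℝ), (∫ y in Ioi x, f2 x y) = beta0 * IxU := by
    have e1 : ∫ x, ∫ y, g x y = ∫ x in Ioi (0:ℝ), (∫ y in Ioi x, f2 x y) := by
      rw [hL, MeasureTheory.integral_indicator measurableSet_Ioi]
    have e2 : ∫ y, ∫ x, g x y = beta0 * IxU := by
      rw [hR, MeasureTheory.integral_indicator measurableSet_Ioi, hIxUdef,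
        MeasureTheory.integral_const_mul]
    rw [← e1, hswap, e2]
  -- Step 3: integrate the eigenvalue equation
  have heq : ∀ x ∈ Ioi (0:ℝ), (∫ y in Ioi x, f2 x y)
      = (V * uinf' x + (mu0 * uinf x + beta0 * (x * uinf x))) / 2 := by
    intro x hx
    have := hU.eigen x hx
    simp only [zero_mul] at this
    have hinner : (∫ y in Ioi x, (fun x => beta0 * x) y * kappa x y * uinf y)
        = ∫ y in Ioi x, f2 x y := by
      apply MeasureTheory.setIntegral_congr_fun measurableSet_Ioi
      intro y _; simp [hf2def]
    rw [hinner] at this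
    linarith
  have hInt2 : ∫ x in Ioi (0:ℝ), (∫ y in Ioi x, f2 x y)
      = (V * 0 + (mu0 * IU + beta0 * IxU)) / 2 := by
    rw [MeasureTheory.setIntegral_congr_fun measurableSet_Ioi heq]
    have i1 : MeasureTheory.IntegrableOn (fun x => V * uinf' x) (Ioi 0) :=
      hU.int_U'.const_mul V
    have i2 : MeasureTheory.IntegrableOn (fun x => mu0 * uinf x) (Ioi 0) :=
      hU.int_U.const_mul mu0
    have i3 : MeasureTheory.IntegrableOn (fun x => beta0 * (x * uinf x)) (Ioi 0) :=
      hU.int_xU.const_mul beta0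
    have i23 : MeasureTheory.IntegrableOn
        (fun x => mu0 * uinf x + beta0 * (x * uinf x)) (Ioi 0) := i2.add i3
    rw [MeasureTheory.integral_div, MeasureTheory.integral_add i1 i23,
      MeasureTheory.integral_add i2 i3, MeasureTheory.integral_const_mul,
      MeasureTheory.integral_const_mul, MeasureTheory.integral_const_mul,
      hIU', ← hIUdef, ← hIxUdef]
  have key : mu0 * IU = beta0 * IxU := by
    have := hA.symm.trans hInt2
    linarith
  rw [div_eq_div_iff hpos.ne' hbeta0.ne']
  linarith
end

section
/- Necessary condition on the polymerization rate for a bimodal equilibrium distribution. Let V∞ > 0, β₀ > 0, μ₀ ∈ ℝ, and let τ, u : (0,∞) → ℝ be twice differentiable with u ≥ 0, satisfying the equilibrium equation V∞·(τ·u)''(x) + ((μ₀ + β₀x)·u(x))' + 2β₀·u(x) = 0 for all x > 0. Suppose there exists x* > 0 with τ(x*) > 0, u(x*) > 0, u'(x*) = 0 and u''(x*) > 0 (i.e. u has a strict interior local-minimum-type critical point, as a bimodal distribution must have). Then V∞·τ''(x*) < −3β₀; in particular inf_{x>0} V∞·τ''(x) < −3β₀. -/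
/-!
At a critical point `x*` of `u` the terms of the equilibrium equation carrying `u'` drop out and
it reduces to `u (V∞ τ'' + 3 β₀) = -V∞ τ u''`. The right-hand side is negative when `τ > 0` and
`u'' > 0`, so dividing by `u(x*) > 0` gives `V∞ τ''(x*) < -3 β₀`.
-/

open Filter Topology

theorem deriv_deriv_mul {f g : ℝ → ℝ} {x : ℝ}
    (hf : ∀ᶠ y in 𝓝 x, DifferentiableAt ℝ f y) (hg : ∀ᶠ y in 𝓝 x, DifferentiableAt ℝ g y)
    (hf' : DifferentiableAt ℝ (deriv f) x) (hg' : DifferentiableAt ℝ (deriv g) x) :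
    deriv (deriv fun y => f y * g y) x =
      deriv (deriv f) x * g x + 2 * deriv f x * deriv g x + f x * deriv (deriv g) x := by
  have hfirst : deriv (fun y => f y * g y) =ᶠ[𝓝 x] fun y => deriv f y * g y + f y * deriv g y := by
    filter_upwards [hf, hg] with y hfy hgy
    exact deriv_mul hfy hgy
  rw [hfirst.deriv_eq, deriv_fun_add (hf'.fun_mul hg.self_of_nhds) (hf.self_of_nhds.fun_mul hg'),
    deriv_fun_mul hf' hg.self_of_nhds, deriv_fun_mul hf.self_of_nhds hg']
  ring

theorem deriv_affine_mul {g : ℝ → ℝ} {x : ℝ} (a b : ℝ) (hg : DifferentiableAt ℝ g x) :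
    deriv (fun y => (a + b * y) * g y) x = b * g x + (a + b * x) * deriv g x := by
  have haffine : HasDerivAt (fun y => a + b * y) b x := by
    simpa using ((hasDerivAt_id x).const_mul b).const_add a
  rw [deriv_fun_mul haffine.differentiableAt hg, haffine.deriv]

theorem bimodal_necessary_condition_general
    (Vinf beta0 mu0 : ℝ) (hVinf : 0 < Vinf)
    (tau u : ℝ → ℝ)
    (htau_d1 : ∀ x > 0, DifferentiableAt ℝ tau x)
    (htau_d2 : ∀ x > 0, DifferentiableAt ℝ (deriv tau) x)
    (hu_d1 : ∀ x > 0, DifferentiableAt ℝ u x)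
    (hu_d2 : ∀ x > 0, DifferentiableAt ℝ (deriv u) x)
    (hode : ∀ x > 0,
      Vinf * deriv (deriv (fun y => tau y * u y)) x
        + deriv (fun y => (mu0 + beta0 * y) * u y) x + 2 * beta0 * u x = 0)
    (xs : ℝ) (hxs : 0 < xs)
    (htaupos : 0 < tau xs) (hupos : 0 < u xs)
    (hcrit : deriv u xs = 0) (hconvex : 0 < deriv (deriv u) xs) :
    Vinf * deriv (deriv tau) xs < -3 * beta0 ∧
    ∃ x > 0, Vinf * deriv (deriv tau) x < -3 * beta0 := by
  have hpos : ∀ᶠ y in 𝓝 xs, 0 < y := eventually_gt_nhds hxs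
  have hreduced : u xs * (Vinf * deriv (deriv tau) xs + 3 * beta0) =
      -(Vinf * tau xs * deriv (deriv u) xs) := by
    have h := hode xs hxs
    rw [deriv_deriv_mul (hpos.mono htau_d1) (hpos.mono hu_d1) (htau_d2 xs hxs) (hu_d2 xs hxs),
      deriv_affine_mul mu0 beta0 (hu_d1 xs hxs), hcrit] at h
    linear_combination h
  have hneg : u xs * (Vinf * deriv (deriv tau) xs + 3 * beta0) < 0 := by
    rw [hreduced, neg_neg_iff_pos]
    positivity
  have hkey : Vinf * deriv (deriv tau) xs < -3 * beta0 := by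
    linarith [neg_of_mul_neg_right hneg hupos.le]
  exact ⟨hkey, xs, hxs, hkey⟩

/-- **Necessary condition on the polymerization rate for a bimodal equilibrium
distribution**: if `u ≥ 0` solves the equilibrium ODE
`V∞ (τ u)'' + ((μ₀ + β₀ x) u)' + 2 β₀ u = 0` on `(0,∞)` and has a strict interior
local-minimum-type critical point `x*` (with `τ(x*) > 0`, `u(x*) > 0`, `u'(x*) = 0`,
`u''(x*) > 0`), then `V∞ τ''(x*) < −3 β₀`; in particular
`inf_{x>0} V∞ τ''(x) < −3 β₀`. -/
theorem bimodal_necessary_condition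
    (Vinf beta0 mu0 : ℝ) (hVinf : 0 < Vinf) (hbeta0 : 0 < beta0)
    (tau u : ℝ → ℝ)
    (htau_d1 : ∀ x > 0, DifferentiableAt ℝ tau x)
    (htau_d2 : ∀ x > 0, DifferentiableAt ℝ (deriv tau) x)
    (hu_d1 : ∀ x > 0, DifferentiableAt ℝ u x)
    (hu_d2 : ∀ x > 0, DifferentiableAt ℝ (deriv u) x)
    (hu_nn : ∀ x > 0, 0 ≤ u x)
    (hode : ∀ x > 0,
      Vinf * deriv (deriv (fun y => tau y * u y)) x
        + deriv (fun y => (mu0 + beta0 * y) * u y) x + 2 * beta0 * u x = 0)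
    (xs : ℝ) (hxs : 0 < xs)
    (htaupos : 0 < tau xs) (hupos : 0 < u xs)
    (hcrit : deriv u xs = 0) (hconvex : 0 < deriv (deriv u) xs) :
    Vinf * deriv (deriv tau) xs < -3 * beta0 ∧
    ∃ x > 0, Vinf * deriv (deriv tau) x < -3 * beta0 :=
  bimodal_necessary_condition_general Vinf beta0 mu0 hVinf tau u htau_d1 htau_d2 hu_d1 hu_d2 hode xs
    hxs htaupos hupos hcrit hconvex
end

section
/- Explicit affine adjoint eigenfunction for linear fragmentation rate. Let V, τ₀, β₀ > 0 and μ₀ ∈ ℝ. Set L = √(V·τ₀/β₀) and φ(x) = 1 + x/L. Then φ satisfies the adjoint eigenvalue equation with eigenvalue Λ = μ₀ − √(τ₀·β₀·V): for every x > 0, −V·τ₀·φ'(x) + (μ₀ + β₀x)·φ(x) = (2β₀x/x)·∫₀^x φ(y)dy + (μ₀ − √(τ₀β₀V))·φ(x). In particular the eigenvalue Λ(V) = μ₀ − √(τ₀β₀V) is a strictly decreasing function of V on (0,∞). -/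
/-!
Since `φ` is affine, `∫₀^x φ = x + x²/(2L)`, and after dividing out `2β₀x/x = 2β₀` the quadratic
terms of the two sides cancel. What remains is an affine identity in `x`, whose two coefficients
say exactly `V τ₀ = β₀ L²` and `Λ = μ₀ − β₀ L`; both follow from `L = √(V τ₀ / β₀)`, since then
`β₀ L = √(τ₀ β₀ V)`.
-/

open Set intervalIntegral

namespace LinearFragmentation

lemma deriv_one_add_div (L x : ℝ) : deriv (fun y : ℝ => 1 + y / L) x = 1 / L := by
  simp

lemma integral_one_add_div (L x : ℝ) :
    ∫ y in (0 : ℝ)..x, (1 + y / L) = x + x ^ 2 / (2 * L) := by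
  rw [integral_add intervalIntegrable_const (intervalIntegrable_id.div_const L),
    integral_div, integral_id]
  simp only [integral_const, sub_zero, smul_eq_mul, mul_one]
  ring

lemma affine_adjoint_eigen_identity {V tau0 beta0 mu0 L x : ℝ} (hL : L ≠ 0)
    (hVt : V * tau0 = beta0 * L ^ 2) :
    -V * tau0 * (1 / L) + (mu0 + beta0 * x) * (1 + x / L)
      = 2 * (beta0 * x) / x * (x + x ^ 2 / (2 * L)) + (mu0 - beta0 * L) * (1 + x / L) := by
  rw [neg_mul, hVt]
  field_simp
  ring

lemma sqrt_mul_eq_mul_sqrt_div {a b : ℝ} (hb : 0 ≤ b) : √(b * a) = b * √(a / b) := by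
  rw [Real.sqrt_div' a hb, mul_div_left_comm, Real.div_sqrt, Real.sqrt_mul hb, mul_comm]

lemma strictAntiOn_sub_sqrt_mul (μ : ℝ) {c : ℝ} (hc : 0 < c) :
    StrictAntiOn (fun W : ℝ => μ - √(c * W)) (Ici 0) := fun _ ha _ _ hab =>
  sub_lt_sub_left (Real.sqrt_lt_sqrt (mul_nonneg hc.le ha) (mul_lt_mul_of_pos_left hab hc)) μ

end LinearFragmentation

open LinearFragmentation in
/-- **Explicit affine adjoint eigenfunction for linear fragmentation rate**: with
`τ ≡ τ₀`, `μ ≡ μ₀`, `β(x) = β₀ x`, `L = √(V τ₀ / β₀)` and `φ(x) = 1 + x/L`, the function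
`φ` solves the adjoint eigenvalue equation with eigenvalue `Λ = μ₀ − √(τ₀ β₀ V)`;
moreover `V ↦ μ₀ − √(τ₀ β₀ V)` is strictly decreasing on `(0,∞)`. -/
theorem adjoint_eigenfunction_linear_fragmentation
    (V tau0 beta0 mu0 : ℝ)
    (hV : 0 < V) (htau0 : 0 < tau0) (hbeta0 : 0 < beta0)
    (L : ℝ) (hL : L = Real.sqrt (V * tau0 / beta0))
    (phi : ℝ → ℝ) (hphi : ∀ x : ℝ, phi x = 1 + x / L) :
    (∀ x > 0,
      -V * tau0 * deriv phi x + (mu0 + beta0 * x) * phi x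
        = 2 * (beta0 * x) / x * (∫ y in (0:ℝ)..x, phi y)
          + (mu0 - Real.sqrt (tau0 * beta0 * V)) * phi x) ∧
    StrictAntiOn (fun W : ℝ => mu0 - Real.sqrt (tau0 * beta0 * W)) (Ioi 0) := by
  have hL_pos : 0 < L := hL ▸ Real.sqrt_pos.mpr (by positivity)
  have hVt : V * tau0 = beta0 * L ^ 2 := by
    rw [hL, Real.sq_sqrt (by positivity)]
    field_simp
  have hsqrt : √(tau0 * beta0 * V) = beta0 * L := by
    rw [hL, ← sqrt_mul_eq_mul_sqrt_div hbeta0.le]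
    ring_nf
  obtain rfl : phi = fun y => 1 + y / L := funext hphi
  refine ⟨fun x _ => ?_,
    (strictAntiOn_sub_sqrt_mul mu0 (mul_pos htau0 hbeta0)).mono Ioi_subset_Ici_self⟩
  rw [deriv_one_add_div, integral_one_add_div, hsqrt]
  exact affine_adjoint_eigen_identity hL_pos.ne' hVt
end

section
/- Explicit affine adjoint eigenfunction for affine coefficients. Let V, τ₀, β₀ > 0, τ₁, β₁ ≥ 0, μ₀ ∈ ℝ. Suppose Z ∈ ℝ satisfies Z < −V·τ₁, Z < −β₁ and (Z + β₁)(Z + V·τ₁) = V·τ₀·β₀. Set L = −(Z + V·τ₁)/β₀ > 0 and φ(x) = 1 + x/L. Then φ satisfies the adjoint eigenvalue equation with eigenvalue Λ = μ₀ + Z: for every x > 0, −V·(τ₀ + τ₁x)·φ'(x) + (μ₀ + β₁ + β₀x)·φ(x) = (2(β₁ + β₀x)/x)·∫₀^x φ(y)dy + (μ₀ + Z)·φ(x). -/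
theorem integral_one_add_div (L x : ℝ) :
    ∫ y in (0:ℝ)..x, (1 + y / L) = x + x ^ 2 / (2 * L) := by
  rw [intervalIntegral.integral_add intervalIntegrable_const
    (intervalIntegral.intervalIntegrable_id.div_const L)]
  simp only [intervalIntegral.integral_const, intervalIntegral.integral_div, integral_id]
  ring

theorem deriv_one_add_div (L x : ℝ) : deriv (fun y : ℝ => 1 + y / L) x = 1 / L := by
  simp

/-- After multiplying by `x`, the coefficients of `x²` agree for every `L`; those of `x` and `1`
agree by `hslope` and `hconst` respectively. -/
theorem adjoint_equation_one_add_div {V tau0 tau1 beta0 beta1 mu0 Z L x : ℝ}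
    (hL : L ≠ 0) (hx : x ≠ 0)
    (hslope : L * beta0 = -(Z + V * tau1)) (hconst : V * tau0 = -L * (Z + beta1)) :
    -V * (tau0 + tau1 * x) * (1 / L) + (mu0 + beta1 + beta0 * x) * (1 + x / L)
      = 2 * (beta1 + beta0 * x) / x * (x + x ^ 2 / (2 * L)) + (mu0 + Z) * (1 + x / L) := by
  field_simp
  linear_combination -hconst - x * hslope

theorem adjoint_eigenfunction_affine_coefficients_general
    (V tau0 beta0 tau1 beta1 mu0 Z : ℝ)
    (hbeta0 : 0 < beta0)
    (hZ1 : Z < -(V * tau1))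
    (hZeq : (Z + beta1) * (Z + V * tau1) = V * tau0 * beta0)
    (L : ℝ) (hL : L = -(Z + V * tau1) / beta0)
    (phi : ℝ → ℝ) (hphi : ∀ x : ℝ, phi x = 1 + x / L) :
    0 < L ∧
    ∀ x > 0,
      -V * (tau0 + tau1 * x) * deriv phi x + (mu0 + beta1 + beta0 * x) * phi x
        = 2 * (beta1 + beta0 * x) / x * (∫ y in (0:ℝ)..x, phi y)
          + (mu0 + Z) * phi x := by
  have hLpos : 0 < L := hL ▸ div_pos (by linarith) hbeta0
  have hslope : L * beta0 = -(Z + V * tau1) := by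
    rw [hL, div_mul_cancel₀ _ hbeta0.ne']
  have hconst : V * tau0 = -L * (Z + beta1) := by
    refine mul_right_cancel₀ hbeta0.ne' ?_
    linear_combination -hZeq + (Z + beta1) * hslope
  obtain rfl : phi = fun y => 1 + y / L := funext hphi
  refine ⟨hLpos, fun x hx => ?_⟩
  rw [deriv_one_add_div, integral_one_add_div]
  exact adjoint_equation_one_add_div hLpos.ne' hx.ne' hslope hconst

/-- **Explicit affine adjoint eigenfunction for affine coefficients**: with
`τ(x) = τ₀ + τ₁ x`, `μ ≡ μ₀`, `β(x) = β₁ + β₀ x`, if `Z < −V τ₁`, `Z < −β₁` and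
`(Z + β₁)(Z + V τ₁) = V τ₀ β₀`, then with `L = −(Z + V τ₁)/β₀ > 0` the affine function
`φ(x) = 1 + x/L` solves the adjoint eigenvalue equation with eigenvalue `Λ = μ₀ + Z`. -/
theorem adjoint_eigenfunction_affine_coefficients
    (V tau0 beta0 tau1 beta1 mu0 Z : ℝ)
    (hV : 0 < V) (htau0 : 0 < tau0) (hbeta0 : 0 < beta0)
    (htau1 : 0 ≤ tau1) (hbeta1 : 0 ≤ beta1)
    (hZ1 : Z < -(V * tau1)) (hZ2 : Z < -beta1)
    (hZeq : (Z + beta1) * (Z + V * tau1) = V * tau0 * beta0)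
    (L : ℝ) (hL : L = -(Z + V * tau1) / beta0)
    (phi : ℝ → ℝ) (hphi : ∀ x : ℝ, phi x = 1 + x / L) :
    0 < L ∧
    ∀ x > 0,
      -V * (tau0 + tau1 * x) * deriv phi x + (mu0 + beta1 + beta0 * x) * phi x
        = 2 * (beta1 + beta0 * x) / x * (∫ y in (0:ℝ)..x, phi y)
          + (mu0 + Z) * phi x :=
  adjoint_eigenfunction_affine_coefficients_general V tau0 beta0 tau1 beta1 mu0 Z hbeta0 hZ1 hZeq L
    hL phi hphi
end

section
/- Existence and uniqueness of the eigenvalue shift for affine coefficients. Let τ₀, β₀ > 0, τ₁, β₁ ≥ 0 and V > 0. Then there exists a unique Z ∈ ℝ with Z < −V·τ₁ satisfying (Z + β₁)(Z + V·τ₁) = V·τ₀·β₀; moreover this Z also satisfies Z < −β₁. -/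
/-!
Put `a = V τ₁`, `b = β₁`, `P = V τ₀ β₀ > 0`. For `Z < -a` the factor `Z + a` is negative, so
`(Z + b)(Z + a) = P > 0` forces `Z + b < 0` as well. On the half-line where both factors are
negative their product is strictly decreasing, which gives uniqueness, and the smaller root of
the quadratic lies below `-a` because its discriminant `(a - b)² + 4P` exceeds `(a - b)²`.
-/

section OrderedRing

variable {R : Type*} [CommRing R] [LinearOrder R] [IsStrictOrderedRing R]

theorem lt_neg_of_mul_add_eq_pos {a b P Z : R} (hP : 0 < P) (hZ : Z < -a)
    (h : (Z + b) * (Z + a) = P) : Z < -b := by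
  have hZa : Z + a < 0 := by linarith
  have hZb : Z + b < 0 := neg_of_mul_pos_left (h ▸ hP) hZa.le
  linarith

theorem eq_of_mul_add_eq_of_lt_neg {a b P Z W : R} (hP : 0 < P)
    (hZ : Z < -a) (hZe : (Z + b) * (Z + a) = P)
    (hW : W < -a) (hWe : (W + b) * (W + a) = P) : Z = W := by
  have hZb := lt_neg_of_mul_add_eq_pos hP hZ hZe
  have hWb := lt_neg_of_mul_add_eq_pos hP hW hWe
  have hfac : (Z - W) * (Z + W + a + b) = 0 := by linear_combination hZe - hWe
  have hsum : Z + W + a + b ≠ 0 := by linarith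
  exact sub_eq_zero.mp ((mul_eq_zero.mp hfac).resolve_right hsum)

end OrderedRing

theorem exists_lt_neg_mul_add_eq {a b P : ℝ} (hP : 0 < P) :
    ∃ Z : ℝ, Z < -a ∧ (Z + b) * (Z + a) = P := by
  set s := √((b - a) ^ 2 + 4 * P)
  have hs2 : s ^ 2 = (b - a) ^ 2 + 4 * P := Real.sq_sqrt (by positivity)
  have hs : a - b < s :=
    (abs_lt_of_sq_lt_sq' (by rw [hs2]; linarith) (Real.sqrt_nonneg _)).2
  exact ⟨(-(a + b) - s) / 2, by linarith, by linear_combination hs2 / 4⟩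

theorem existsUnique_lt_neg_mul_add_eq {a b P : ℝ} (hP : 0 < P) :
    ∃! Z : ℝ, Z < -a ∧ (Z + b) * (Z + a) = P := by
  obtain ⟨Z, hZ⟩ := exists_lt_neg_mul_add_eq (a := a) (b := b) hP
  exact ⟨Z, hZ, fun W hW => eq_of_mul_add_eq_of_lt_neg hP hW.1 hW.2 hZ.1 hZ.2⟩

theorem eigenvalue_shift_exists_unique_general
    (tau0 beta0 tau1 beta1 V : ℝ)
    (htau0 : 0 < tau0) (hbeta0 : 0 < beta0)
    (hV : 0 < V) :
    (∃! Z : ℝ, Z < -(V * tau1) ∧ (Z + beta1) * (Z + V * tau1) = V * tau0 * beta0) ∧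
    (∀ Z : ℝ, Z < -(V * tau1) → (Z + beta1) * (Z + V * tau1) = V * tau0 * beta0 →
      Z < -beta1) := by
  have hP : 0 < V * tau0 * beta0 := by positivity
  exact ⟨existsUnique_lt_neg_mul_add_eq hP, fun _ => lt_neg_of_mul_add_eq_pos hP⟩

/-- **Existence and uniqueness of the eigenvalue shift for affine coefficients**: for
`τ₀, β₀ > 0`, `τ₁, β₁ ≥ 0` and `V > 0`, there is a unique `Z < −V τ₁` with
`(Z + β₁)(Z + V τ₁) = V τ₀ β₀`; moreover this `Z` also satisfies `Z < −β₁`. -/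
theorem eigenvalue_shift_exists_unique
    (tau0 beta0 tau1 beta1 V : ℝ)
    (htau0 : 0 < tau0) (hbeta0 : 0 < beta0)
    (htau1 : 0 ≤ tau1) (hbeta1 : 0 ≤ beta1) (hV : 0 < V) :
    (∃! Z : ℝ, Z < -(V * tau1) ∧ (Z + beta1) * (Z + V * tau1) = V * tau0 * beta0) ∧
    (∀ Z : ℝ, Z < -(V * tau1) → (Z + beta1) * (Z + V * tau1) = V * tau0 * beta0 →
      Z < -beta1) :=
  eigenvalue_shift_exists_unique_general tau0 beta0 tau1 beta1 V htau0 hbeta0 hV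
end

section
/- Monotonicity of the eigenvalue for affine coefficients. Let τ₀, β₀ > 0 and τ₁, β₁ ≥ 0. For V > 0 let Z(V) denote the unique real number with Z(V) < −V·τ₁ and (Z(V) + β₁)(Z(V) + V·τ₁) = V·τ₀·β₀. Then V ↦ Z(V) is strictly decreasing on (0,∞); consequently, for any μ₀ ∈ ℝ, the eigenvalue Λ(V) = μ₀ + Z(V) is a strictly decreasing function of V on (0,∞). -/
/-!
Both factors `Z + β₁` and `Z + Vτ₁` of the characteristic equation are negative (the second by
the branch condition, the first because the product `Vτ₀β₀` is positive). If `Z` failed to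
decrease between `a < b`, both factors would be larger at `b`, hence closer to `0`, so their
product `bτ₀β₀` would be at most `aτ₀β₀`.
-/

open Set

theorem strictAntiOn_of_mul_eq_mul_pos {R : Type*} [CommRing R] [LinearOrder R]
    [IsStrictOrderedRing R] {β τ c : R} {Z : R → R} (hτ : 0 ≤ τ) (hc : 0 < c)
    (hZ : ∀ V > 0, Z V < -(V * τ) ∧ (Z V + β) * (Z V + V * τ) = V * c) :
    StrictAntiOn Z (Ioi 0) := by
  intro a ha b hb hab
  obtain ⟨-, hZa⟩ := hZ a ha
  obtain ⟨hb_lt, hZb⟩ := hZ b hb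
  by_contra! hle
  have hvb : Z b + b * τ < 0 := by linarith
  have hub : Z b + β < 0 := neg_of_mul_pos_left (hZb ▸ mul_pos hb hc) hvb.le
  have hv : Z a + a * τ ≤ Z b + b * τ := add_le_add hle (mul_le_mul_of_nonneg_right hab.le hτ)
  have hbc : b * c ≤ a * c := hZa ▸ hZb ▸
    mul_le_mul_of_nonpos_of_nonpos (add_le_add_left hle β) hv (by linarith) hvb.le
  exact (le_of_mul_le_mul_right hbc hc).not_gt hab

theorem eigenvalue_strictly_decreasing_affine_general
    (tau0 beta0 tau1 beta1 : ℝ)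
    (htau0 : 0 < tau0) (hbeta0 : 0 < beta0)
    (htau1 : 0 ≤ tau1)
    (Z : ℝ → ℝ)
    (hZ : ∀ V > 0, Z V < -(V * tau1) ∧
      (Z V + beta1) * (Z V + V * tau1) = V * tau0 * beta0) :
    StrictAntiOn Z (Ioi 0) ∧
    ∀ mu0 : ℝ, StrictAntiOn (fun V => mu0 + Z V) (Ioi 0) := by
  have hZ_anti : StrictAntiOn Z (Ioi 0) :=
    strictAntiOn_of_mul_eq_mul_pos htau1 (mul_pos htau0 hbeta0) fun V hV =>
      (hZ V hV).imp_right fun h => h.trans (mul_assoc V tau0 beta0)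
  exact ⟨hZ_anti, fun mu0 => hZ_anti.const_add mu0⟩

/-- **Monotonicity of the eigenvalue for affine coefficients**: if for each `V > 0`,
`Z(V)` is the unique real with `Z(V) < −V τ₁` and `(Z(V) + β₁)(Z(V) + V τ₁) = V τ₀ β₀`,
then `Z` is strictly decreasing on `(0,∞)`, and hence so is the eigenvalue
`Λ(V) = μ₀ + Z(V)` for every `μ₀`. -/
theorem eigenvalue_strictly_decreasing_affine
    (tau0 beta0 tau1 beta1 : ℝ)
    (htau0 : 0 < tau0) (hbeta0 : 0 < beta0)
    (htau1 : 0 ≤ tau1) (hbeta1 : 0 ≤ beta1)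
    (Z : ℝ → ℝ)
    (hZ : ∀ V > 0, Z V < -(V * tau1) ∧
      (Z V + beta1) * (Z V + V * tau1) = V * tau0 * beta0) :
    StrictAntiOn Z (Ioi 0) ∧
    ∀ mu0 : ℝ, StrictAntiOn (fun V => mu0 + Z V) (Ioi 0) :=
  eigenvalue_strictly_decreasing_affine_general tau0 beta0 tau1 beta1 htau0 hbeta0 htau1 Z hZ
end

section
/- Duality identity for the weighted polymer mass. Let V̄, Λ̄ ∈ ℝ, let τ, μ, β : (0,∞) → [0,∞), let κ : (0,∞)×(0,∞) → [0,∞) vanish for x ≥ y, and let φ : (0,∞) → (0,∞) be differentiable and satisfy the adjoint equation −V̄·τ(x)·φ'(x) + (μ(x)+β(x))·φ(x) = 2β(x)·∫₀^x κ(y,x)φ(y)dy + Λ̄·φ(x) for all x > 0. Fix t and suppose: u(·,t) ≥ 0 satisfies ∂ₜu(x,t) = −V(t)·∂ₓ(τ(x)u(x,t)) − (μ(x)+β(x))u(x,t) + 2∫ₓ^∞ β(y)κ(x,y)u(y,t)dy pointwise on (0,∞); the functions u(·,t)φ, (μ+β)u(·,t)φ, τu(·,t)φ' and ∂ₓ(τu)(·,t)·φ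 are integrable; τ(x)u(x,t)φ(x) → 0 as x→0⁺ and as x→∞; (x,y) ↦ β(y)κ(x,y)u(y,t)φ(x) is integrable over {0 < x < y}; and s ↦ ∫₀^∞ u(x,s)φ(x)dx is differentiable at t with derivative ∫₀^∞ ∂ₜu(x,t)φ(x)dx. Then d/dt ∫₀^∞ u(x,t)φ(x)dx = −Λ̄·∫₀^∞ u(x,t)φ(x)dx + (V(t) − V̄)·∫₀^∞ τ(x)φ'(x)u(x,t)dx. -/
/-!
Test the polymer equation against `φ`. Integrating the transport term by parts (the boundary
terms vanish by the decay of `τ u φ`) turns `-V ∫ ∂ₓ(τu) φ` into `V ∫ τ u φ'`, and Fubini on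
`{0 < x < y}` moves the fragmentation gain onto `φ`, producing `2 β(y) ∫₀^y κ(x,y) φ(x) dx`.
The adjoint equation rewrites that as `-V̄ τ φ' + (μ + β) φ - Λ̄ φ`, which cancels the loss term.
-/

open MeasureTheory Set Filter Topology

section Triangle

variable {E : Type*} [NormedAddCommGroup E] [NormedSpace ℝ E] {a : ℝ} {f : ℝ → ℝ → E}

theorem measurableSet_triangle (a : ℝ) : MeasurableSet {p : ℝ × ℝ | a < p.1 ∧ p.1 < p.2} :=
  (measurableSet_lt measurable_const measurable_fst).inter
    (measurableSet_lt measurable_fst measurable_snd)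

theorem integral_indicator_triangle_slice_fst (x : ℝ) :
    ∫ y, {p : ℝ × ℝ | a < p.1 ∧ p.1 < p.2}.indicator (Function.uncurry f) (x, y)
      = (Ioi a).indicator (fun x => ∫ y in Ioi x, f x y) x := by
  by_cases hx : a < x
  · simp [indicator, hx, ← integral_indicator measurableSet_Ioi]
  · simp [indicator, hx]

theorem integral_indicator_triangle_slice_snd (y : ℝ) :
    ∫ x, {p : ℝ × ℝ | a < p.1 ∧ p.1 < p.2}.indicator (Function.uncurry f) (x, y)
      = (Ioi a).indicator (fun y => ∫ x in a..y, f x y) y := by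
  by_cases hy : a < y
  · rw [indicator_of_mem (mem_Ioi.2 hy), intervalIntegral.integral_of_le hy.le,
      integral_Ioc_eq_integral_Ioo, ← integral_indicator measurableSet_Ioo]
    rfl
  · have hempty : ∀ x, ¬ (a < x ∧ x < y) := fun x ⟨hax, hxy⟩ => hy (hax.trans hxy)
    simp [indicator, hy, hempty]

theorem integrableOn_Ioi_integral_Ioi_of_integrableOn_triangle
    (hf : IntegrableOn (Function.uncurry f) {p : ℝ × ℝ | a < p.1 ∧ p.1 < p.2}) :
    IntegrableOn (fun x => ∫ y in Ioi x, f x y) (Ioi a) := by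
  rw [← integrable_indicator_iff measurableSet_Ioi]
  have hF := (integrable_indicator_iff (measurableSet_triangle a)).2 hf
  exact hF.integral_prod_left.congr (.of_forall integral_indicator_triangle_slice_fst)

theorem integral_Ioi_integral_Ioi_eq_integral_Ioi_intervalIntegral
    (hf : IntegrableOn (Function.uncurry f) {p : ℝ × ℝ | a < p.1 ∧ p.1 < p.2}) :
    ∫ x in Ioi a, ∫ y in Ioi x, f x y = ∫ y in Ioi a, ∫ x in a..y, f x y := by
  have hF := (integrable_indicator_iff (measurableSet_triangle a)).2 hf
  rw [← integral_indicator measurableSet_Ioi, ← integral_indicator measurableSet_Ioi]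
  simp_rw [← integral_indicator_triangle_slice_fst, ← integral_indicator_triangle_slice_snd]
  exact integral_integral_swap hF

end Triangle

section FragmentationGain

variable {beta w phi : ℝ → ℝ} {kappa : ℝ → ℝ → ℝ} {a : ℝ}

theorem integrableOn_fragmentation_gain
    (h : IntegrableOn (fun p : ℝ × ℝ => beta p.2 * kappa p.1 p.2 * w p.2 * phi p.1)
      {p : ℝ × ℝ | a < p.1 ∧ p.1 < p.2}) :
    IntegrableOn (fun x => (∫ y in Ioi x, beta y * kappa x y * w y) * phi x) (Ioi a) := by
  simp_rw [← integral_mul_const]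
  exact integrableOn_Ioi_integral_Ioi_of_integrableOn_triangle
    (f := fun x y => beta y * kappa x y * w y * phi x) h

theorem integral_fragmentation_gain_eq
    (h : IntegrableOn (fun p : ℝ × ℝ => beta p.2 * kappa p.1 p.2 * w p.2 * phi p.1)
      {p : ℝ × ℝ | a < p.1 ∧ p.1 < p.2}) :
    ∫ x in Ioi a, (∫ y in Ioi x, beta y * kappa x y * w y) * phi x
      = ∫ y in Ioi a, beta y * w y * ∫ x in a..y, kappa x y * phi x := by
  simp_rw [← integral_mul_const, ← intervalIntegral.integral_const_mul, ← mul_assoc,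
    mul_right_comm (beta _) (w _)]
  exact integral_Ioi_integral_Ioi_eq_integral_Ioi_intervalIntegral
    (f := fun x y => beta y * kappa x y * w y * phi x) h

end FragmentationGain

section TestedEquations

variable {tau mu beta phi phi' w : ℝ → ℝ} {kappa : ℝ → ℝ → ℝ}

theorem integral_adjoint_equation_mul {Vbar Lam : ℝ}
    (hadj : ∀ x > 0, -Vbar * tau x * phi' x + (mu x + beta x) * phi x
      = 2 * beta x * (∫ y in (0:ℝ)..x, kappa y x * phi y) + Lam * phi x)
    (hwphi : IntegrableOn (fun x => w x * phi x) (Ioi 0))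
    (hloss : IntegrableOn (fun x => (mu x + beta x) * w x * phi x) (Ioi 0))
    (htransport : IntegrableOn (fun x => tau x * w x * phi' x) (Ioi 0)) :
    2 * ∫ y in Ioi (0:ℝ), beta y * w y * ∫ x in (0:ℝ)..y, kappa x y * phi x
      = -Vbar * (∫ x in Ioi (0:ℝ), tau x * w x * phi' x)
        + (∫ x in Ioi (0:ℝ), (mu x + beta x) * w x * phi x)
        - Lam * ∫ x in Ioi (0:ℝ), w x * phi x := by
  calc 2 * ∫ y in Ioi (0:ℝ), beta y * w y * ∫ x in (0:ℝ)..y, kappa x y * phi x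
      = ∫ y in Ioi (0:ℝ), -Vbar * (tau y * w y * phi' y) + (mu y + beta y) * w y * phi y
          - Lam * (w y * phi y) := by
        rw [← integral_const_mul]
        refine setIntegral_congr_fun measurableSet_Ioi fun y hy => ?_
        linear_combination w y * (hadj y hy).symm
    _ = _ := by
        rw [integral_sub, integral_add, integral_const_mul, integral_const_mul]
        exacts [htransport.const_mul _, hloss, (htransport.const_mul _).add hloss,
          hwphi.const_mul _]

theorem integral_polymer_equation_mul {V : ℝ} {wt Dx : ℝ → ℝ}
    (hpde : ∀ x > 0, wt x = -V * Dx x - (mu x + beta x) * w x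
      + 2 * ∫ y in Ioi x, beta y * kappa x y * w y)
    (hloss : IntegrableOn (fun x => (mu x + beta x) * w x * phi x) (Ioi 0))
    (hDx : IntegrableOn (fun x => Dx x * phi x) (Ioi 0))
    (hgain : IntegrableOn (fun x => (∫ y in Ioi x, beta y * kappa x y * w y) * phi x) (Ioi 0)) :
    ∫ x in Ioi (0:ℝ), wt x * phi x
      = -V * (∫ x in Ioi (0:ℝ), Dx x * phi x)
        - (∫ x in Ioi (0:ℝ), (mu x + beta x) * w x * phi x)
        + 2 * ∫ x in Ioi (0:ℝ), (∫ y in Ioi x, beta y * kappa x y * w y) * phi x := by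
  calc ∫ x in Ioi (0:ℝ), wt x * phi x
      = ∫ x in Ioi (0:ℝ), -V * (Dx x * phi x) - (mu x + beta x) * w x * phi x
          + 2 * ((∫ y in Ioi x, beta y * kappa x y * w y) * phi x) := by
        refine setIntegral_congr_fun measurableSet_Ioi fun x hx => ?_
        rw [hpde x hx]
        ring
    _ = _ := by
        rw [integral_add, integral_sub, integral_const_mul, integral_const_mul]
        exacts [hDx.const_mul _, hloss, (hDx.const_mul _).sub hloss, hgain.const_mul _]

end TestedEquations

theorem duality_identity_weighted_mass_general
    (Vbar Lam : ℝ) (tau mu beta : ℝ → ℝ) (kappa : ℝ → ℝ → ℝ)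
    (phi phi' : ℝ → ℝ)
    (hphi_deriv : ∀ x > 0, HasDerivAt phi (phi' x) x)
    -- the adjoint eigenvalue equation
    (hadj : ∀ x > 0,
      -Vbar * tau x * phi' x + (mu x + beta x) * phi x
        = 2 * beta x * (∫ y in (0:ℝ)..x, kappa y x * phi y) + Lam * phi x)
    (V : ℝ → ℝ) (u : ℝ → ℝ → ℝ) (t : ℝ) (ut Dx : ℝ → ℝ)
    -- Dx x is the spatial derivative of τ u(·,t) at x, ut x the time derivative of u(x,·) at t
    (hDx : ∀ x > 0, HasDerivAt (fun y => tau y * u y t) (Dx x) x)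
    -- the polymer equation holds pointwise on (0,∞)
    (hpde : ∀ x > 0, ut x = -V t * Dx x - (mu x + beta x) * u x t
        + 2 * ∫ y in Ioi x, beta y * kappa x y * u y t)
    -- integrability hypotheses
    (hint_uphi : IntegrableOn (fun x => u x t * phi x) (Ioi 0))
    (hint_mb : IntegrableOn (fun x => (mu x + beta x) * u x t * phi x) (Ioi 0))
    (hint_tau : IntegrableOn (fun x => tau x * u x t * phi' x) (Ioi 0))
    (hint_Dx : IntegrableOn (fun x => Dx x * phi x) (Ioi 0))
    -- decay of τ u φ at 0⁺ and ∞
    (hlim0 : Tendsto (fun x => tau x * u x t * phi x) (nhdsWithin 0 (Ioi 0)) (nhds 0))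
    (hlimtop : Tendsto (fun x => tau x * u x t * phi x) atTop (nhds 0))
    -- integrability of the fragmentation term on {0 < x < y}
    (hint_frag : IntegrableOn
        (fun p : ℝ × ℝ => beta p.2 * kappa p.1 p.2 * u p.2 t * phi p.1)
        {p : ℝ × ℝ | 0 < p.1 ∧ p.1 < p.2})
    -- the weighted mass is differentiable at t with derivative ∫ ∂ₜu φ
    (hM : HasDerivAt (fun s => ∫ x in Ioi (0:ℝ), u x s * phi x)
        (∫ x in Ioi (0:ℝ), ut x * phi x) t) :
    HasDerivAt (fun s => ∫ x in Ioi (0:ℝ), u x s * phi x)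
      (-Lam * (∫ x in Ioi (0:ℝ), u x t * phi x)
        + (V t - Vbar) * ∫ x in Ioi (0:ℝ), tau x * phi' x * u x t) t := by
  have hparts := integral_Ioi_mul_deriv_eq_deriv_mul hDx hphi_deriv hint_tau hint_Dx hlim0 hlimtop
  have htested := integral_polymer_equation_mul hpde hint_mb hint_Dx
    (integrableOn_fragmentation_gain (w := fun x => u x t) hint_frag)
  have hgain := integral_fragmentation_gain_eq (w := fun x => u x t) hint_frag
  have hdual := integral_adjoint_equation_mul hadj hint_uphi hint_mb hint_tau
  have hcomm : ∫ x in Ioi (0:ℝ), tau x * phi' x * u x t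
      = ∫ x in Ioi (0:ℝ), tau x * u x t * phi' x := by
    simp only [mul_right_comm _ (phi' _)]
  convert hM using 1
  rw [htested, hgain, hcomm]
  linear_combination V t * hparts - hdual

/-- **Duality identity for the weighted polymer mass**: if `φ > 0` solves the adjoint
eigenvalue equation at monomer level `V̄` with eigenvalue `Λ̄`, and `u(·,t) ≥ 0` solves
the polymer equation pointwise at time `t` (with suitable integrability, decay and
differentiation-under-the-integral hypotheses), then
`d/dt ∫ u φ = −Λ̄ ∫ u φ + (V(t) − V̄) ∫ τ φ' u`. -/
theorem duality_identity_weighted_mass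
    (Vbar Lam : ℝ) (tau mu beta : ℝ → ℝ) (kappa : ℝ → ℝ → ℝ)
    (htau_nn : ∀ x > 0, 0 ≤ tau x) (hmu_nn : ∀ x > 0, 0 ≤ mu x)
    (hbeta_nn : ∀ x > 0, 0 ≤ beta x)
    (hkap_nn : ∀ x y : ℝ, 0 ≤ kappa x y)
    (hkap_supp : ∀ x y : ℝ, y ≤ x → kappa x y = 0)
    (phi phi' : ℝ → ℝ)
    (hphi_pos : ∀ x > 0, 0 < phi x)
    (hphi_deriv : ∀ x > 0, HasDerivAt phi (phi' x) x)
    -- the adjoint eigenvalue equation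
    (hadj : ∀ x > 0,
      -Vbar * tau x * phi' x + (mu x + beta x) * phi x
        = 2 * beta x * (∫ y in (0:ℝ)..x, kappa y x * phi y) + Lam * phi x)
    (V : ℝ → ℝ) (u : ℝ → ℝ → ℝ) (t : ℝ) (ut Dx : ℝ → ℝ)
    (hu_nn : ∀ x > 0, 0 ≤ u x t)
    -- Dx x is the spatial derivative of τ u(·,t) at x, ut x the time derivative of u(x,·) at t
    (hDx : ∀ x > 0, HasDerivAt (fun y => tau y * u y t) (Dx x) x)
    (hut : ∀ x > 0, HasDerivAt (fun s => u x s) (ut x) t)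
    -- the polymer equation holds pointwise on (0,∞)
    (hpde : ∀ x > 0, ut x = -V t * Dx x - (mu x + beta x) * u x t
        + 2 * ∫ y in Ioi x, beta y * kappa x y * u y t)
    -- integrability hypotheses
    (hint_uphi : IntegrableOn (fun x => u x t * phi x) (Ioi 0))
    (hint_mb : IntegrableOn (fun x => (mu x + beta x) * u x t * phi x) (Ioi 0))
    (hint_tau : IntegrableOn (fun x => tau x * u x t * phi' x) (Ioi 0))
    (hint_Dx : IntegrableOn (fun x => Dx x * phi x) (Ioi 0))
    -- decay of τ u φ at 0⁺ and ∞
    (hlim0 : Tendsto (fun x => tau x * u x t * phi x) (nhdsWithin 0 (Ioi 0)) (nhds 0))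
    (hlimtop : Tendsto (fun x => tau x * u x t * phi x) atTop (nhds 0))
    -- integrability of the fragmentation term on {0 < x < y}
    (hint_frag : IntegrableOn
        (fun p : ℝ × ℝ => beta p.2 * kappa p.1 p.2 * u p.2 t * phi p.1)
        {p : ℝ × ℝ | 0 < p.1 ∧ p.1 < p.2})
    -- the weighted mass is differentiable at t with derivative ∫ ∂ₜu φ
    (hM : HasDerivAt (fun s => ∫ x in Ioi (0:ℝ), u x s * phi x)
        (∫ x in Ioi (0:ℝ), ut x * phi x) t) :
    HasDerivAt (fun s => ∫ x in Ioi (0:ℝ), u x s * phi x)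
      (-Lam * (∫ x in Ioi (0:ℝ), u x t * phi x)
        + (V t - Vbar) * ∫ x in Ioi (0:ℝ), tau x * phi' x * u x t) t :=
  duality_identity_weighted_mass_general Vbar Lam tau mu beta kappa phi phi' hphi_deriv hadj V u t
    ut Dx hDx hpde hint_uphi hint_mb hint_tau hint_Dx hlim0 hlimtop hint_frag hM
end

section
/- Local nonlinear stability of the disease-free steady state (Theorem 1). Let λ, γ > 0 and V̄ = λ/γ. Let τ : (0,∞) → [0,∞), let φ : (0,∞) → (0,∞) be differentiable, let Λ̄ > 0 (the adjoint eigenvalue at V̄, positive because Λ(·) is decreasing and V̄ < V∞), and let K₁, K₂ > 0 be constants with |τ(x)·φ'(x)| ≤ K₁·φ(x) and τ(x) ≤ K₂·φ(x) for all x > 0. Let V : [0,∞) → ℝ be differentiable and u : (0,∞)×[0,∞) → [0,∞) be such that for all t ≥ 0: the functions u(·,t)φ, τ(·)u(·,t) and |φ'(·)|τ(·)u(·,t) are integrable on (0,∞); V'(t) = λ − γV(t) − V(t)·∫₀^∞ τ(x)u(x,t)dx; and the weak form of the polymer equation tested against φ holds, i.e. t ↦ M(t) := ∫₀^∞ u(x,t)φ(x)dx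 is differentiable with M'(t) = −Λ̄·M(t) + (V(t) − V̄)·∫₀^∞ τ(x)φ'(x)u(x,t)dx. Then the zero steady state (V̄, 0) is locally nonlinearly stable: there exist ε > 0, C > 0 and r > 0, depending only on λ, γ, Λ̄, K₁, K₂, such that if M(0) + |V(0) − V̄| ≤ ε, then M(t) + |V(t) − V̄| ≤ C·e^{−r·t} for all t ≥ 0. -/
/-!
Along a solution, the energy `E = M + (V - V̄)²` satisfies
`E' = -Λ̄ M + (V - V̄) ∫ τ φ' u - 2 (V - V̄) (γ (V - V̄) + V ∫ τ u)`.
The bounds `|τ φ'| ≤ K₁ φ` and `τ ≤ K₂ φ` control both integrals by `M`, so as long as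
`|V - V̄| ≤ δ` with `δ` small, the cross terms are absorbed and `E' ≤ -r E` with
`r = min (Λ̄/2) (2γ)`. Since `E' < 0` on the level set `E = δ²`, a solution starting
below `δ²` stays there, and Grönwall gives `E(t) ≤ E(0) e^{-r t}`; finally
`M + |V - V̄| ≤ E + √E`.
-/

open MeasureTheory Set Filter Topology Real

section Bootstrap

variable {E E' : ℝ → ℝ}

theorem le_of_hasDerivAt_neg_of_eq {η : ℝ} (hE : ∀ t ≥ 0, HasDerivAt E (E' t) t)
    (hlevel : ∀ t ≥ 0, E t = η → E' t < 0) (h0 : E 0 ≤ η) : ∀ t ≥ 0, E t ≤ η :=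
  fun _ ht => image_le_of_deriv_right_lt_deriv_boundary (B := fun _ => η) (B' := 0)
    (fun s hs => (hE s hs.1).continuousAt.continuousWithinAt)
    (fun s hs => (hE s hs.1).hasDerivWithinAt) h0 (fun _ => hasDerivAt_const _ _)
    (fun s hs => hlevel s hs.1) ⟨ht, le_rfl⟩

theorem le_mul_exp_of_hasDerivAt_le_neg_mul {r : ℝ} (hE : ∀ t ≥ 0, HasDerivAt E (E' t) t)
    (hdecay : ∀ t ≥ 0, E' t ≤ -r * E t) : ∀ t ≥ 0, E t ≤ E 0 * exp (-r * t) := by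
  intro t ht
  have h := le_gronwallBound_of_liminf_deriv_right_le (K := -r) (ε := 0) (b := t)
    (fun s hs => (hE s hs.1).continuousAt.continuousWithinAt)
    (fun s hs _ hr => (hE s hs.1).hasDerivWithinAt.liminf_right_slope_le hr) le_rfl
    (fun s hs => (hdecay s hs.1).trans_eq (add_zero _).symm) t ⟨ht, le_rfl⟩
  rwa [gronwallBound_ε0, sub_zero] at h

theorem le_mul_exp_of_hasDerivAt_le_neg_mul_of_le {r η : ℝ} (hr : 0 < r) (hη : 0 < η)
    (hE : ∀ t ≥ 0, HasDerivAt E (E' t) t)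
    (hdecay : ∀ t ≥ 0, E t ≤ η → E' t ≤ -r * E t) (h0 : E 0 ≤ η) :
    ∀ t ≥ 0, E t ≤ E 0 * exp (-r * t) := by
  have hbelow : ∀ t ≥ 0, E t ≤ η := le_of_hasDerivAt_neg_of_eq hE (fun t ht hEt => by
    have h := hdecay t ht hEt.le
    rw [hEt] at h
    nlinarith) h0
  exact le_mul_exp_of_hasDerivAt_le_neg_mul hE fun t ht => hdecay t ht (hbelow t ht)

end Bootstrap

theorem abs_setIntegral_le_const_mul {α : Type*} [MeasurableSpace α] {μ : Measure α}
    {s : Set α} {f g : α → ℝ} (K : ℝ) (hs : MeasurableSet s) (hg : IntegrableOn g s μ)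
    (h : ∀ x ∈ s, |f x| ≤ K * g x) :
    |∫ x in s, f x ∂μ| ≤ K * ∫ x in s, g x ∂μ := by
  rw [← integral_const_mul]
  exact norm_integral_le_of_norm_le (hg.const_mul K) ((ae_restrict_iff' hs).2 (.of_forall fun x hx => (norm_eq_abs (f x)).trans_le (h x hx)))

theorem exists_pos_mul_add_mul_lt (K1 K2 Vb : ℝ) {c : ℝ} (hc : 0 < c) :
    ∃ δ, 0 < δ ∧ δ ≤ 1 ∧ δ * K1 + 2 * δ * (δ + |Vb|) * K2 < c := by
  have hlim : Tendsto (fun δ : ℝ => δ * K1 + 2 * δ * (δ + |Vb|) * K2) (𝓝[>] 0) (𝓝 0) := by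
    have h := (show Continuous fun δ : ℝ => δ * K1 + 2 * δ * (δ + |Vb|) * K2 by fun_prop).tendsto 0
    simpa using h.mono_left nhdsWithin_le_nhds
  exact (Eventually.and (Ioc_mem_nhdsGT zero_lt_one) (hlim.eventually (gt_mem_nhds hc))).exists.imp
    fun δ ⟨⟨hδ, hδ1⟩, h⟩ => ⟨hδ, hδ1, h⟩

theorem energy_rate_le {Lam gam Vb K1 K2 δ m w i1 i2 : ℝ} (hm : 0 ≤ m)
    (hi1 : |i1| ≤ K1 * m) (hi2 : |i2| ≤ K2 * m) (hw : |w| ≤ δ)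
    (hcoef : δ * K1 + 2 * δ * (δ + |Vb|) * K2 ≤ Lam / 2) :
    -Lam * m + w * i1 - 2 * w * (gam * w + (w + Vb) * i2) ≤ -(Lam / 2) * m - 2 * gam * w ^ 2 := by
  have hwV : |w + Vb| ≤ δ + |Vb| := (abs_add_le _ _).trans (by linarith)
  have hcross1 : w * i1 ≤ δ * (K1 * m) := (le_abs_self _).trans <| by
    rw [abs_mul]; exact mul_le_mul hw hi1 (abs_nonneg _) ((abs_nonneg _).trans hw)
  have hcross2 : -(w * ((w + Vb) * i2)) ≤ δ * ((δ + |Vb|) * (K2 * m)) := (neg_le_abs _).trans <| by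
    rw [abs_mul, abs_mul]
    exact mul_le_mul hw (mul_le_mul hwV hi2 (abs_nonneg _) ((abs_nonneg _).trans hwV))
      (by positivity) ((abs_nonneg _).trans hw)
  nlinarith [mul_le_mul_of_nonneg_right hcoef hm]

theorem energy_le_mul_exp {lam gam Lam Vb K1 K2 δ r : ℝ} {M V I1 I2 : ℝ → ℝ}
    (hlam : lam = gam * Vb) (hδ : 0 < δ) (hr : 0 < r) (hrLam : r ≤ Lam / 2) (hrgam : r ≤ 2 * gam)
    (hcoef : δ * K1 + 2 * δ * (δ + |Vb|) * K2 ≤ Lam / 2)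
    (hM : ∀ t ≥ 0, 0 ≤ M t) (hI1 : ∀ t ≥ 0, |I1 t| ≤ K1 * M t)
    (hI2 : ∀ t ≥ 0, |I2 t| ≤ K2 * M t)
    (hV : ∀ t ≥ 0, HasDerivAt V (lam - gam * V t - V t * I2 t) t)
    (hM' : ∀ t ≥ 0, HasDerivAt M (-Lam * M t + (V t - Vb) * I1 t) t)
    (h0 : M 0 + (V 0 - Vb) ^ 2 ≤ δ ^ 2) :
    ∀ t ≥ 0, M t + (V t - Vb) ^ 2 ≤ (M 0 + (V 0 - Vb) ^ 2) * exp (-r * t) := by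
  refine le_mul_exp_of_hasDerivAt_le_neg_mul_of_le hr (by positivity)
    (fun t ht => (hM' t ht).add (((hV t ht).sub_const Vb).pow 2)) (fun t ht hE => ?_) h0
  have hw : |V t - Vb| ≤ δ := abs_le_of_sq_le_sq (by linarith [hM t ht]) hδ.le
  have hrate := energy_rate_le (gam := gam) (hM t ht) (hI1 t ht) (hI2 t ht) hw hcoef
  have hr1 := mul_le_mul_of_nonneg_right hrLam (hM t ht)
  have hr2 := mul_le_mul_of_nonneg_right hrgam (sq_nonneg (V t - Vb))
  norm_num only [hlam, sub_add_cancel] at hrate ⊢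
  nlinarith

theorem add_abs_le_two_mul_exp {m w E0 r t : ℝ} (hm : 0 ≤ m) (hE0 : E0 ≤ 1) (hr : 0 ≤ r)
    (ht : 0 ≤ t) (h : m + w ^ 2 ≤ E0 * exp (-r * t)) : m + |w| ≤ 2 * exp (-(r / 2) * t) := by
  set x := exp (-(r / 2) * t)
  have hx : 0 < x := exp_pos _
  have hx1 : x ≤ 1 := exp_le_one_iff.2 (by nlinarith)
  have hsq : exp (-r * t) = x ^ 2 := by rw [← exp_nat_mul]; ring_nf
  have hE : m + w ^ 2 ≤ x ^ 2 := h.trans (by rw [hsq]; nlinarith)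
  have hw : |w| ≤ x := abs_le_of_sq_le_sq (by nlinarith) hx.le
  nlinarith

theorem zero_state_local_stability_general
    (lam gam Lam K1 K2 : ℝ)
    (hgam : 0 < gam) (hLam : 0 < Lam) :
    ∃ eps > 0, ∃ C > 0, ∃ r > 0,
      ∀ (tau phi phi' : ℝ → ℝ) (V : ℝ → ℝ) (u : ℝ → ℝ → ℝ),
        (∀ x > 0, 0 ≤ tau x) →
        (∀ x > 0, 0 < phi x) →
        (∀ x > 0, HasDerivAt phi (phi' x) x) →
        (∀ x > 0, |tau x * phi' x| ≤ K1 * phi x) →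
        (∀ x > 0, tau x ≤ K2 * phi x) →
        (∀ t ≥ 0, ∀ x > 0, 0 ≤ u x t) →
        (∀ t ≥ 0, IntegrableOn (fun x => u x t * phi x) (Ioi 0)) →
        (∀ t ≥ 0, IntegrableOn (fun x => tau x * u x t) (Ioi 0)) →
        (∀ t ≥ 0, IntegrableOn (fun x => |phi' x| * tau x * u x t) (Ioi 0)) →
        -- the monomer equation
        (∀ t ≥ 0, HasDerivAt V
            (lam - gam * V t - V t * ∫ x in Ioi (0:ℝ), tau x * u x t) t) →
        -- the weak form of the polymer equation tested against φ
        (∀ t ≥ 0, HasDerivAt (fun s => ∫ x in Ioi (0:ℝ), u x s * phi x)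
            (-Lam * (∫ x in Ioi (0:ℝ), u x t * phi x)
              + (V t - lam / gam) * ∫ x in Ioi (0:ℝ), tau x * phi' x * u x t) t) →
        (∫ x in Ioi (0:ℝ), u x 0 * phi x) + |V 0 - lam / gam| ≤ eps →
        ∀ t ≥ 0,
          (∫ x in Ioi (0:ℝ), u x t * phi x) + |V t - lam / gam|
            ≤ C * Real.exp (-r * t) := by
  obtain ⟨δ, hδ, hδ1, hcoef⟩ := exists_pos_mul_add_mul_lt K1 K2 (lam / gam) (half_pos hLam)
  have hr : 0 < min (Lam / 2) (2 * gam) := lt_min (half_pos hLam) (by positivity)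
  refine ⟨δ ^ 2, by positivity, 2, two_pos, min (Lam / 2) (2 * gam) / 2, half_pos hr, ?_⟩
  intro tau phi phi' V u htau hphi _ hb1 hb2 hu hint _ _ hV hM' h0 t ht
  have hM : ∀ s ≥ 0, 0 ≤ ∫ x in Ioi (0:ℝ), u x s * phi x := fun s hs =>
    setIntegral_nonneg measurableSet_Ioi fun x hx => mul_nonneg (hu s hs x hx) (hphi x hx).le
  have hI1 : ∀ s ≥ 0, |∫ x in Ioi (0:ℝ), tau x * phi' x * u x s|
      ≤ K1 * ∫ x in Ioi (0:ℝ), u x s * phi x := fun s hs =>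
    abs_setIntegral_le_const_mul K1 measurableSet_Ioi (hint s hs) fun x hx => by
      rw [abs_mul, abs_of_nonneg (hu s hs x hx)]
      nlinarith [hb1 x hx, hu s hs x hx]
  have hI2 : ∀ s ≥ 0, |∫ x in Ioi (0:ℝ), tau x * u x s|
      ≤ K2 * ∫ x in Ioi (0:ℝ), u x s * phi x := fun s hs =>
    abs_setIntegral_le_const_mul K2 measurableSet_Ioi (hint s hs) fun x hx => by
      rw [abs_of_nonneg (mul_nonneg (htau x hx) (hu s hs x hx))]
      nlinarith [hb2 x hx, hu s hs x hx]
  have hE0 : (∫ x in Ioi (0:ℝ), u x 0 * phi x) + (V 0 - lam / gam) ^ 2 ≤ δ ^ 2 := by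
    have hW0 : |V 0 - lam / gam| ≤ 1 := by nlinarith [hM 0 le_rfl]
    nlinarith [sq_abs (V 0 - lam / gam), abs_nonneg (V 0 - lam / gam)]
  exact add_abs_le_two_mul_exp (hM t ht) (by nlinarith) hr.le ht
    (energy_le_mul_exp (by field_simp) hδ hr (min_le_left _ _) (min_le_right _ _) hcoef.le
      hM hI1 hI2 hV hM' hE0 t ht)

/-- **Local nonlinear stability of the disease-free steady state** (Theorem 1 of the
paper): with `V̄ = λ/γ` and adjoint eigenvalue `Λ̄ = Λ(V̄) > 0`, there exist
`ε, C, r > 0`, depending only on `λ, γ, Λ̄, K₁, K₂`, such that any solution `(V, u)` of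
the prion system (in the weak, duality form tested against the positive adjoint
eigenfunction `φ` satisfying `|τ φ'| ≤ K₁ φ` and `τ ≤ K₂ φ`) with
`M(0) + |V(0) − V̄| ≤ ε` satisfies `M(t) + |V(t) − V̄| ≤ C e^{−r t}` for all `t ≥ 0`,
where `M(t) = ∫ u(x,t) φ(x) dx`. -/
theorem zero_state_local_stability
    (lam gam Lam K1 K2 : ℝ)
    (hlam : 0 < lam) (hgam : 0 < gam) (hLam : 0 < Lam)
    (hK1 : 0 < K1) (hK2 : 0 < K2) :
    ∃ eps > 0, ∃ C > 0, ∃ r > 0,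
      ∀ (tau phi phi' : ℝ → ℝ) (V : ℝ → ℝ) (u : ℝ → ℝ → ℝ),
        (∀ x > 0, 0 ≤ tau x) →
        (∀ x > 0, 0 < phi x) →
        (∀ x > 0, HasDerivAt phi (phi' x) x) →
        (∀ x > 0, |tau x * phi' x| ≤ K1 * phi x) →
        (∀ x > 0, tau x ≤ K2 * phi x) →
        (∀ t ≥ 0, ∀ x > 0, 0 ≤ u x t) →
        (∀ t ≥ 0, IntegrableOn (fun x => u x t * phi x) (Ioi 0)) →
        (∀ t ≥ 0, IntegrableOn (fun x => tau x * u x t) (Ioi 0)) →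
        (∀ t ≥ 0, IntegrableOn (fun x => |phi' x| * tau x * u x t) (Ioi 0)) →
        -- the monomer equation
        (∀ t ≥ 0, HasDerivAt V
            (lam - gam * V t - V t * ∫ x in Ioi (0:ℝ), tau x * u x t) t) →
        -- the weak form of the polymer equation tested against φ
        (∀ t ≥ 0, HasDerivAt (fun s => ∫ x in Ioi (0:ℝ), u x s * phi x)
            (-Lam * (∫ x in Ioi (0:ℝ), u x t * phi x)
              + (V t - lam / gam) * ∫ x in Ioi (0:ℝ), tau x * phi' x * u x t) t) →
        (∫ x in Ioi (0:ℝ), u x 0 * phi x) + |V 0 - lam / gam| ≤ eps →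
        ∀ t ≥ 0,
          (∫ x in Ioi (0:ℝ), u x t * phi x) + |V t - lam / gam|
            ≤ C * Real.exp (-r * t) :=
  zero_state_local_stability_general lam gam Lam K1 K2 hgam hLam
end

section
/- Global nonlinear stability of the disease-free steady state (Theorem 2). Let λ, γ > 0 and V̄ = λ/γ. Let τ : (0,∞) → [0,∞), let φ : (0,∞) → (0,∞) be differentiable, let Λ̄ > 0, and let K₁, K₂, k > 0 be constants with |τ(x)·φ'(x)| ≤ K₁·φ(x), τ(x) ≤ K₂·φ(x), and τ(x) ≥ k·φ(x) for all x > 0. Assume the smallness condition K₁·K₂·V̄ < k·Λ̄ (i.e. V̄/Λ̄ is small enough compared to k/(K₁K₂)). Let V : [0,∞) → ℝ be differentiable and u : (0,∞)×[0,∞) → [0,∞) be such that for all t ≥ 0: the functions u(·,t)φ, τ(·)u(·,t) and |φ'(·)|τ(·)u(·,t) are integrable on (0,∞); V'(t) = λ − γV(t) − V(t)·∫₀^∞ τ(x)u(x,t)dx; and t ↦ M(t) := ∫₀^∞ u(x,t)φ(x)dx is differentiable with M'(t) = −Λ̄·M(t) + (V(t) − V̄)·∫₀^∞ τ(x)φ'(x)u(x,t)dx.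 Then the zero steady state is globally nonlinearly stable: there exist constants α > 0 and r > 0, depending only on λ, γ, Λ̄, K₁, K₂, k, such that for every such solution (with no smallness restriction on the initial data), α·M(t) + |V(t) − V̄| ≤ (α·M(0) + |V(0) − V̄|)·e^{−r·t} for all t ≥ 0. -/
open MeasureTheory Set Filter Topology

/-- One-sided slope limit for the absolute value of a differentiable function. -/
private lemma tendsto_slope_abs {W : ℝ → ℝ} {w x : ℝ} (h : HasDerivAt W w x) :
    Filter.Tendsto (fun z => (z - x)⁻¹ * (|W z| - |W x|)) (nhdsWithin x (Set.Ioi x))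
      (nhds (if 0 < W x then w else if W x < 0 then -w else |w|)) := by
  have hs : Filter.Tendsto (fun z => (z - x)⁻¹ * (W z - W x)) (nhdsWithin x (Set.Ioi x))
      (nhds w) := by
    have h1 := (hasDerivAt_iff_tendsto_slope.1 h).mono_left
      (nhdsWithin_mono x (fun z hz => Set.mem_compl_singleton_iff.2 (ne_of_gt hz)))
    refine h1.congr fun z => ?_
    rw [slope_def_field, div_eq_inv_mul]
  rcases lt_trichotomy 0 (W x) with hpos | hzero | hneg
  · rw [if_pos hpos]
    have hev : ∀ᶠ z in nhdsWithin x (Set.Ioi x), 0 < W z :=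
      (h.continuousAt.eventually (eventually_gt_nhds hpos)).filter_mono nhdsWithin_le_nhds
    refine hs.congr' (hev.mono fun z hz => ?_)
    show _ = (z - x)⁻¹ * (|W z| - |W x|)
    rw [abs_of_pos hz, abs_of_pos hpos]
  · rw [if_neg (by rw [← hzero]; exact lt_irrefl 0),
      if_neg (by rw [← hzero]; exact lt_irrefl 0)]
    have hev : ∀ᶠ z in nhdsWithin x (Set.Ioi x), z ∈ Set.Ioi x := self_mem_nhdsWithin
    refine hs.abs.congr' (hev.mono fun z hz => ?_)
    show _ = (z - x)⁻¹ * (|W z| - |W x|)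
    have hzx : (0:ℝ) < (z - x)⁻¹ := inv_pos.2 (sub_pos.2 hz)
    rw [abs_mul, abs_of_pos hzx, ← hzero, sub_zero, abs_zero, sub_zero]
  · rw [if_neg (not_lt.2 hneg.le), if_pos hneg]
    have hev : ∀ᶠ z in nhdsWithin x (Set.Ioi x), W z < 0 :=
      (h.continuousAt.eventually (eventually_lt_nhds hneg)).filter_mono nhdsWithin_le_nhds
    refine hs.neg.congr' (hev.mono fun z hz => ?_)
    show _ = (z - x)⁻¹ * (|W z| - |W x|)
    rw [abs_of_neg hz, abs_of_neg hneg]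
    ring

/-- Abstract Lyapunov decay via Grönwall, for the prion moment system. -/
private lemma lyapunov_decay
    (Vb alpha r gam Lam K1 K2 k : ℝ)
    (hVb : 0 < Vb) (hαpos : 0 < alpha) (hknn : 0 ≤ k) (hαK1 : alpha * K1 ≤ k)
    (hr1 : r ≤ gam) (hr2 : r * alpha + Vb * K2 ≤ alpha * Lam)
    (M Pf If V : ℝ → ℝ)
    (hM0 : ∀ s, 0 ≤ s → 0 ≤ M s)
    (hPk : ∀ s, 0 ≤ s → k * M s ≤ Pf s)
    (hPK2 : ∀ s, 0 ≤ s → Pf s ≤ K2 * M s)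
    (hIabs : ∀ s, 0 ≤ s → |If s| ≤ K1 * M s)
    (hVode : ∀ s, 0 ≤ s → HasDerivAt V (gam * Vb - gam * V s - V s * Pf s) s)
    (hMode : ∀ s, 0 ≤ s → HasDerivAt M (-Lam * M s + (V s - Vb) * If s) s)
    (t : ℝ) (ht : 0 ≤ t) :
    alpha * M t + |V t - Vb| ≤ (alpha * M 0 + |V 0 - Vb|) * Real.exp (-r * t) := by
  set F : ℝ → ℝ := fun s => alpha * M s + |V s - Vb| with hF
  set fp : ℝ → ℝ := fun s => alpha * (-Lam * M s + (V s - Vb) * If s) +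
      (if 0 < V s - Vb then gam * Vb - gam * V s - V s * Pf s
       else if V s - Vb < 0 then -(gam * Vb - gam * V s - V s * Pf s)
       else |gam * Vb - gam * V s - V s * Pf s|) with hfp
  have hcont : ContinuousOn F (Set.Icc 0 t) := by
    intro s hs
    have c1 : ContinuousAt M s := (hMode s hs.1).continuousAt
    have c2 : ContinuousAt V s := (hVode s hs.1).continuousAt
    exact ((continuousAt_const.mul c1).add
      ((c2.sub continuousAt_const).abs)).continuousWithinAt
  have hslope : ∀ x ∈ Set.Ico 0 t, ∀ ρ, fp x < ρ →
      ∃ᶠ z in nhdsWithin x (Set.Ioi x), (z - x)⁻¹ * (F z - F x) < ρ := by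
    intro x hx ρ hρ
    have hx0 : (0:ℝ) ≤ x := hx.1
    have hW : HasDerivAt (fun s => V s - Vb) (gam * Vb - gam * V x - V x * Pf x) x :=
      (hVode x hx0).sub_const Vb
    have hT2 : Filter.Tendsto (fun z => (z - x)⁻¹ * (|V z - Vb| - |V x - Vb|))
        (nhdsWithin x (Set.Ioi x))
        (nhds (if 0 < V x - Vb then gam * Vb - gam * V x - V x * Pf x
          else if V x - Vb < 0 then -(gam * Vb - gam * V x - V x * Pf x)
          else |gam * Vb - gam * V x - V x * Pf x|)) := tendsto_slope_abs hW
    have hT1 : Filter.Tendsto (fun z => (z - x)⁻¹ * (M z - M x)) (nhdsWithin x (Set.Ioi x))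
        (nhds (-Lam * M x + (V x - Vb) * If x)) := by
      have h1 := (hasDerivAt_iff_tendsto_slope.1 (hMode x hx0)).mono_left
        (nhdsWithin_mono x (fun z hz => Set.mem_compl_singleton_iff.2 (ne_of_gt hz)))
      refine h1.congr fun z => ?_
      rw [slope_def_field, div_eq_inv_mul]
    have hTF : Filter.Tendsto (fun z => (z - x)⁻¹ * (F z - F x)) (nhdsWithin x (Set.Ioi x))
        (nhds (fp x)) := by
      have h2 := (hT1.const_mul alpha).add hT2
      refine h2.congr fun z => ?_
      show alpha * ((z - x)⁻¹ * (M z - M x)) + (z - x)⁻¹ * (|V z - Vb| - |V x - Vb|)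
        = (z - x)⁻¹ * (F z - F x)
      rw [hF]
      ring
    exact (hTF.eventually (eventually_lt_nhds hρ)).frequently
  have hbound : ∀ x ∈ Set.Ico 0 t, fp x ≤ (-r) * F x + 0 := by
    intro x hx
    have hx0 : (0:ℝ) ≤ x := hx.1
    have hM := hM0 x hx0
    have hk1 := hPk x hx0
    have hk2 := hPK2 x hx0
    have hI := hIabs x hx0
    have hPnn : 0 ≤ Pf x := le_trans (mul_nonneg hknn hM) hk1
    have hWI : (V x - Vb) * If x ≤ |V x - Vb| * (K1 * M x) :=
      le_trans (le_abs_self _)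
        (by rw [abs_mul]; exact mul_le_mul_of_nonneg_left hI (abs_nonneg _))
    have hDb : (if 0 < V x - Vb then gam * Vb - gam * V x - V x * Pf x
        else if V x - Vb < 0 then -(gam * Vb - gam * V x - V x * Pf x)
        else |gam * Vb - gam * V x - V x * Pf x|)
        ≤ -gam * |V x - Vb| - Pf x * |V x - Vb| + Vb * Pf x := by
      rcases lt_trichotomy 0 (V x - Vb) with h | h | h
      · rw [if_pos h, abs_of_pos h]
        have h1 : 0 ≤ Vb * Pf x := mul_nonneg hVb.le hPnn
        nlinarith
      · have hv : V x = Vb := by linarith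
        rw [if_neg (by rw [← h]; exact lt_irrefl 0), if_neg (by rw [← h]; exact lt_irrefl 0)]
        have h1 : 0 ≤ Vb * Pf x := mul_nonneg hVb.le hPnn
        have he : gam * Vb - gam * V x - V x * Pf x = -(Vb * Pf x) := by rw [hv]; ring
        have he2 : V x - Vb = 0 := by linarith
        rw [he, abs_neg, abs_of_nonneg h1, he2, abs_zero]
        linarith
      · rw [if_neg (not_lt.2 h.le), if_pos h, abs_of_neg h]
        nlinarith [mul_nonneg hVb.le hPnn]
    have p0 : alpha * ((V x - Vb) * If x) ≤ alpha * (|V x - Vb| * (K1 * M x)) :=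
      mul_le_mul_of_nonneg_left hWI hαpos.le
    have p1 : 0 ≤ (Pf x - k * M x) * |V x - Vb| := mul_nonneg (by linarith) (abs_nonneg _)
    have p2 : 0 ≤ (k - alpha * K1) * (M x * |V x - Vb|) :=
      mul_nonneg (by linarith) (mul_nonneg hM (abs_nonneg _))
    have p3 : 0 ≤ Vb * (K2 * M x - Pf x) := mul_nonneg hVb.le (by linarith)
    have p4 : 0 ≤ (gam - r) * |V x - Vb| := mul_nonneg (by linarith) (abs_nonneg _)
    have p5 : 0 ≤ (alpha * Lam - r * alpha - Vb * K2) * M x := mul_nonneg (by linarith) hM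
    rw [hfp, hF]
    simp only []
    nlinarith [hDb, p0, p1, p2, p3, p4, p5]
  have key := le_gronwallBound_of_liminf_deriv_right_le hcont hslope (le_refl (F 0)) hbound
  have hfin := key t ⟨ht, le_refl t⟩
  rw [sub_zero, gronwallBound_ε0] at hfin
  rw [hF] at hfin
  simpa using hfin
/-- **Global nonlinear stability of the disease-free steady state** (Theorem 2 of the
paper): with `V̄ = λ/γ`, adjoint eigenvalue `Λ̄ = Λ(V̄) > 0`, weight bounds
`|τ φ'| ≤ K₁ φ`, `τ ≤ K₂ φ`, `τ ≥ k φ`, and the smallness condition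
`K₁ K₂ V̄ < k Λ̄`, there exist `α, r > 0`, depending only on `λ, γ, Λ̄, K₁, K₂, k`, such
that every solution `(V, u)` of the prion system (in the weak, duality form) satisfies
`α M(t) + |V(t) − V̄| ≤ (α M(0) + |V(0) − V̄|) e^{−r t}` for all `t ≥ 0`, with no
smallness restriction on the initial data, where `M(t) = ∫ u(x,t) φ(x) dx`. -/
theorem zero_state_global_stability
    (lam gam Lam K1 K2 k : ℝ)
    (hlam : 0 < lam) (hgam : 0 < gam) (hLam : 0 < Lam)
    (hK1 : 0 < K1) (hK2 : 0 < K2) (hk : 0 < k)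
    (hsmall : K1 * K2 * (lam / gam) < k * Lam) :
    ∃ alpha > 0, ∃ r > 0,
      ∀ (tau phi phi' : ℝ → ℝ) (V : ℝ → ℝ) (u : ℝ → ℝ → ℝ),
        (∀ x > 0, 0 ≤ tau x) →
        (∀ x > 0, 0 < phi x) →
        (∀ x > 0, HasDerivAt phi (phi' x) x) →
        (∀ x > 0, |tau x * phi' x| ≤ K1 * phi x) →
        (∀ x > 0, tau x ≤ K2 * phi x) →
        (∀ x > 0, k * phi x ≤ tau x) →
        (∀ t ≥ 0, ∀ x > 0, 0 ≤ u x t) →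
        (∀ t ≥ 0, IntegrableOn (fun x => u x t * phi x) (Ioi 0)) →
        (∀ t ≥ 0, IntegrableOn (fun x => tau x * u x t) (Ioi 0)) →
        (∀ t ≥ 0, IntegrableOn (fun x => |phi' x| * tau x * u x t) (Ioi 0)) →
        -- the monomer equation
        (∀ t ≥ 0, HasDerivAt V
            (lam - gam * V t - V t * ∫ x in Ioi (0:ℝ), tau x * u x t) t) →
        -- the weak form of the polymer equation tested against φ
        (∀ t ≥ 0, HasDerivAt (fun s => ∫ x in Ioi (0:ℝ), u x s * phi x)
            (-Lam * (∫ x in Ioi (0:ℝ), u x t * phi x)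
              + (V t - lam / gam) * ∫ x in Ioi (0:ℝ), tau x * phi' x * u x t) t) →
        ∀ t ≥ 0,
          alpha * (∫ x in Ioi (0:ℝ), u x t * phi x) + |V t - lam / gam|
            ≤ (alpha * (∫ x in Ioi (0:ℝ), u x 0 * phi x) + |V 0 - lam / gam|)
              * Real.exp (-r * t) := by
  obtain ⟨Vb, hVbdef, hVb⟩ : ∃ Vb, Vb = lam / gam ∧ 0 < Vb :=
    ⟨lam / gam, rfl, div_pos hlam hgam⟩
  rw [← hVbdef] at hsmall ⊢
  have hmid : Vb * K2 / Lam < k / K1 := by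
    rw [div_lt_div_iff₀ hLam hK1]
    nlinarith
  set alpha := (Vb * K2 / Lam + k / K1) / 2 with halpha
  have hα1 : Vb * K2 / Lam < alpha := by rw [halpha]; linarith
  have hα2 : alpha < k / K1 := by rw [halpha]; linarith
  have hαpos : 0 < alpha := lt_trans (div_pos (mul_pos hVb hK2) hLam) hα1
  have hαK1 : alpha * K1 ≤ k := ((lt_div_iff₀ hK1).1 hα2).le
  have e1 : Vb * K2 < alpha * Lam := (div_lt_iff₀ hLam).1 hα1
  set r := min gam (Lam - Vb * K2 / alpha) with hr
  have hrpos : 0 < r := by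
    rw [hr]
    refine lt_min hgam ?_
    have h5 : Vb * K2 / alpha < Lam := (div_lt_iff₀ hαpos).2 (by linarith)
    linarith
  have hr1 : r ≤ gam := by rw [hr]; exact min_le_left _ _
  have hr2 : r * alpha + Vb * K2 ≤ alpha * Lam := by
    have h4 : r ≤ Lam - Vb * K2 / alpha := by rw [hr]; exact min_le_right _ _
    have h2 := mul_le_mul_of_nonneg_right h4 hαpos.le
    have h3 : (Lam - Vb * K2 / alpha) * alpha = alpha * Lam - Vb * K2 := by
      rw [sub_mul, div_mul_cancel₀ _ (ne_of_gt hαpos)]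
      ring
    linarith
  refine ⟨alpha, hαpos, r, hrpos, ?_⟩
  intro tau phi phi' V u htau hphi hphid hbnd1 hbnd2 hbnd3 hu hiM hiP hiI hVode hMode t ht
  have hM0 : ∀ s, 0 ≤ s → 0 ≤ ∫ x in Set.Ioi (0:ℝ), u x s * phi x := fun s hs =>
    setIntegral_nonneg measurableSet_Ioi fun x hx => mul_nonneg (hu s hs x hx) (hphi x hx).le
  have hPk : ∀ s, 0 ≤ s → k * (∫ x in Set.Ioi (0:ℝ), u x s * phi x)
      ≤ ∫ x in Set.Ioi (0:ℝ), tau x * u x s := by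
    intro s hs
    have h := setIntegral_mono_on ((hiM s hs).const_mul k) (hiP s hs) measurableSet_Ioi
      (fun x hx => by
        calc k * (u x s * phi x) = k * phi x * u x s := by ring
          _ ≤ tau x * u x s := mul_le_mul_of_nonneg_right (hbnd3 x hx) (hu s hs x hx))
    rwa [integral_const_mul] at h
  have hPK2 : ∀ s, 0 ≤ s → (∫ x in Set.Ioi (0:ℝ), tau x * u x s)
      ≤ K2 * ∫ x in Set.Ioi (0:ℝ), u x s * phi x := by
    intro s hs
    have h := setIntegral_mono_on (hiP s hs) ((hiM s hs).const_mul K2) measurableSet_Ioi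
      (fun x hx => by
        calc tau x * u x s ≤ K2 * phi x * u x s :=
              mul_le_mul_of_nonneg_right (hbnd2 x hx) (hu s hs x hx)
          _ = K2 * (u x s * phi x) := by ring)
    rwa [integral_const_mul] at h
  have hiI' : ∀ s, 0 ≤ s → IntegrableOn (fun x => tau x * phi' x * u x s) (Set.Ioi 0) := by
    intro s hs
    have hmeas : AEStronglyMeasurable (fun x => tau x * phi' x * u x s)
        ((volume : Measure ℝ).restrict (Set.Ioi 0)) := by
      have h1 : AEStronglyMeasurable (fun x => deriv phi x * (tau x * u x s))
          ((volume : Measure ℝ).restrict (Set.Ioi 0)) :=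
        (measurable_deriv phi).aestronglyMeasurable.mul (hiP s hs).aestronglyMeasurable
      refine h1.congr ?_
      filter_upwards [ae_restrict_mem measurableSet_Ioi] with x hx
      rw [(hphid x hx).deriv]
      ring
    refine Integrable.mono' ((hiM s hs).const_mul K1) hmeas ?_
    filter_upwards [ae_restrict_mem measurableSet_Ioi] with x hx
    rw [Real.norm_eq_abs, abs_mul, abs_of_nonneg (hu s hs x hx)]
    calc |tau x * phi' x| * u x s ≤ K1 * phi x * u x s :=
          mul_le_mul_of_nonneg_right (hbnd1 x hx) (hu s hs x hx)
      _ = K1 * (u x s * phi x) := by ring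
  have hIabs : ∀ s, 0 ≤ s → |∫ x in Set.Ioi (0:ℝ), tau x * phi' x * u x s|
      ≤ K1 * ∫ x in Set.Ioi (0:ℝ), u x s * phi x := by
    intro s hs
    rw [abs_le]
    constructor
    · have h := setIntegral_mono_on (((hiM s hs).const_mul K1).neg) (hiI' s hs)
        measurableSet_Ioi (fun x hx => by
          have h1 : -(K1 * phi x) ≤ tau x * phi' x := by
            have h2 := neg_abs_le (tau x * phi' x)
            have h3 := hbnd1 x hx
            linarith
          calc -(K1 * (u x s * phi x)) = -(K1 * phi x) * u x s := by ring
            _ ≤ tau x * phi' x * u x s :=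
              mul_le_mul_of_nonneg_right h1 (hu s hs x hx))
      simp only [Pi.neg_apply] at h
      rwa [integral_neg, integral_const_mul] at h
    · have h := setIntegral_mono_on (hiI' s hs) ((hiM s hs).const_mul K1)
        measurableSet_Ioi (fun x hx => by
          have h1 : tau x * phi' x ≤ K1 * phi x := by
            have h2 := le_abs_self (tau x * phi' x)
            have h3 := hbnd1 x hx
            linarith
          calc tau x * phi' x * u x s ≤ K1 * phi x * u x s :=
                mul_le_mul_of_nonneg_right h1 (hu s hs x hx)
            _ = K1 * (u x s * phi x) := by ring)
      rwa [integral_const_mul] at h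
  have hgv : gam * Vb = lam := by
    rw [hVbdef, mul_comm]
    exact div_mul_cancel₀ lam (ne_of_gt hgam)
  have hVode' : ∀ s, 0 ≤ s → HasDerivAt V
      (gam * Vb - gam * V s - V s * ∫ x in Set.Ioi (0:ℝ), tau x * u x s) s := by
    intro s hs
    rw [hgv]
    exact hVode s hs
  exact lyapunov_decay Vb alpha r gam Lam K1 K2 k hVb hαpos hk.le hαK1 hr1 hr2
    (fun s => ∫ x in Set.Ioi (0:ℝ), u x s * phi x)
    (fun s => ∫ x in Set.Ioi (0:ℝ), tau x * u x s)
    (fun s => ∫ x in Set.Ioi (0:ℝ), tau x * phi' x * u x s)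
    V hM0 hPk hPK2 hIabs hVode' hMode t ht
end

section
/- Instability of the disease-free steady state (Theorem 3). Let λ, γ > 0 and V̄ = λ/γ. Let τ : (0,∞) → [0,∞), let φ : (0,∞) → (0,∞) be differentiable, let Λ̄ < 0 (the adjoint eigenvalue at V̄, negative because Λ(·) is decreasing and V∞ < V̄), and let K > 0 be a constant with τ(x)·φ'(x) ≤ K·φ(x) for all x > 0. Let V : [0,∞) → [0,∞) be differentiable and u : (0,∞)×[0,∞) → [0,∞) be such that for all t ≥ 0: the functions u(·,t)φ, τ(·)u(·,t) and |φ'(·)|τ(·)u(·,t) are integrable on (0,∞); V'(t) = λ − γV(t) − V(t)·∫₀^∞ τ(x)u(x,t)dx; t ↦ M(t) := ∫₀^∞ u(x,t)φ(x)dx is differentiable with M'(t) = −Λ̄·M(t) + (V(t) − V̄)·∫₀^∞ τ(x)φ'(x)u(x,t)dx; and V(0) ≤ V̄. If M(0) > 0, then the quantity Q(t) := M(t) + (V̄ − V(t)) (a sum of two nonnegative terms, since V(t) ≤ V̄ for all t ≥ 0) does not tend to 0 as t → ∞; in particular the solution does not converge to the zero steady state, which is therefore unstable. -/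
/-!
Since `(V̄ - V)' ≥ -γ (V̄ - V)`, the monomer level never exceeds `V̄`; together with
`τ φ' ≤ K φ` this turns the equation for `M` into `M' ≥ (-Λ̄ - K (V̄ - V)) M`, so `M` stays
positive. If `Q = M + (V̄ - V)` tended to `0`, then eventually `K (V̄ - V) < -Λ̄`, so `M`
would be nondecreasing from some time `T` on and `Q ≥ M ≥ M(T) > 0` from then on.
-/

open MeasureTheory Set Filter Topology

theorem monotoneOn_mul_exp_of_hasDerivAt {f f' : ℝ → ℝ} {a c : ℝ}
    (hf : ∀ t ≥ a, HasDerivAt f (f' t) t) (hle : ∀ t ≥ a, c * f t ≤ f' t) :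
    MonotoneOn (fun t => f t * Real.exp (-c * t)) (Ici a) := by
  have hderiv : ∀ t ≥ a, HasDerivAt (fun t => f t * Real.exp (-c * t))
      ((f' t - c * f t) * Real.exp (-c * t)) t := fun t ht =>
    ((hf t ht).mul ((hasDerivAt_id' t).const_mul (-c)).exp).congr_deriv (by ring)
  refine monotoneOn_of_hasDerivWithinAt_nonneg (convex_Ici a)
    (fun t ht => (hderiv t ht).continuousAt.continuousWithinAt)
    (fun t ht => (hderiv t (interior_subset ht)).hasDerivWithinAt) fun t ht => ?_
  exact mul_nonneg (sub_nonneg.2 (hle t (interior_subset ht))) (Real.exp_pos _).le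

theorem mul_exp_le_of_hasDerivAt {f f' : ℝ → ℝ} {a c : ℝ}
    (hf : ∀ t ≥ a, HasDerivAt f (f' t) t) (hle : ∀ t ≥ a, c * f t ≤ f' t) :
    ∀ t ≥ a, f a * Real.exp (c * (t - a)) ≤ f t := fun t ht => by
  have h := monotoneOn_mul_exp_of_hasDerivAt hf hle self_mem_Ici (mem_Ici.2 ht) ht
  calc f a * Real.exp (c * (t - a)) = f a * Real.exp (-c * a) * Real.exp (c * t) := by
        rw [mul_assoc, ← Real.exp_add]; ring_nf
    _ ≤ f t * Real.exp (-c * t) * Real.exp (c * t) :=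
        mul_le_mul_of_nonneg_right h (Real.exp_pos _).le
    _ = f t := by rw [mul_assoc, ← Real.exp_add, neg_mul, neg_add_cancel, Real.exp_zero, mul_one]

theorem setIntegral_le_of_le_of_nonneg {α : Type*} [MeasurableSpace α] {μ : Measure α}
    {s : Set α} {f g : α → ℝ} (hs : MeasurableSet s) (hg : IntegrableOn g s μ)
    (hg_nn : ∀ x ∈ s, 0 ≤ g x) (hfg : ∀ x ∈ s, f x ≤ g x) :
    ∫ x in s, f x ∂μ ≤ ∫ x in s, g x ∂μ := by
  by_cases hf : IntegrableOn f s μ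
  · exact setIntegral_mono_on hf hg hs hfg
  · exact integral_undef hf ▸ setIntegral_nonneg hs hg_nn

theorem monomer_le_steady_state {lam gam : ℝ} (hgam : gam ≠ 0) {V I : ℝ → ℝ}
    (hV_nn : ∀ t ≥ 0, 0 ≤ V t) (hI_nn : ∀ t ≥ 0, 0 ≤ I t)
    (hV : ∀ t ≥ 0, HasDerivAt V (lam - gam * V t - V t * I t) t) (hV0 : V 0 ≤ lam / gam) :
    ∀ t ≥ 0, V t ≤ lam / gam := fun t ht => by
  have hgap := mul_exp_le_of_hasDerivAt (f := fun t => lam / gam - V t) (c := -gam)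
    (fun t ht => (hV t ht).const_sub (lam / gam))
    (fun t ht => by
      have : -gam * (lam / gam - V t) = -(lam - gam * V t) := by field_simp
      nlinarith [mul_nonneg (hV_nn t ht) (hI_nn t ht)]) t ht
  exact sub_nonneg.1 ((mul_nonneg (sub_nonneg.2 hV0) (Real.exp_pos _).le).trans hgap)

theorem not_tendsto_mass_add_deficit_zero {Lam K Vb : ℝ} {M V J : ℝ → ℝ}
    (hLam : Lam < 0) (hK : 0 < K) (hV_nn : ∀ t ≥ 0, 0 ≤ V t) (hV_le : ∀ t ≥ 0, V t ≤ Vb)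
    (hM_nn : ∀ t ≥ 0, 0 ≤ M t) (hJ_le : ∀ t ≥ 0, J t ≤ K * M t)
    (hM : ∀ t ≥ 0, HasDerivAt M (-Lam * M t + (V t - Vb) * J t) t) (hM0 : 0 < M 0) :
    ¬ Tendsto (fun t => M t + (Vb - V t)) atTop (𝓝 0) := by
  have hM_growth : ∀ t ≥ 0,
      (-Lam - K * (Vb - V t)) * M t ≤ -Lam * M t + (V t - Vb) * J t := fun t ht => by
    nlinarith [mul_le_mul_of_nonpos_left (hJ_le t ht) (sub_nonpos.2 (hV_le t ht))]
  have hM_pos : ∀ t ≥ 0, 0 < M t := fun t ht =>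
    (mul_pos hM0 (Real.exp_pos _)).trans_le <|
      mul_exp_le_of_hasDerivAt (c := -Lam - K * Vb) hM (fun t ht =>
        (mul_le_mul_of_nonneg_right (by linarith [mul_nonneg hK.le (hV_nn t ht)])
          (hM_nn t ht)).trans (hM_growth t ht)) t ht
  intro hQ
  obtain ⟨T, hT⟩ := eventually_atTop.1 <|
    (hQ.eventually (gt_mem_nhds (div_pos (neg_pos.2 hLam) hK))).and (eventually_ge_atTop 0)
  have hM_mono : ∀ t ≥ T, M T ≤ M t := by
    simpa using mul_exp_le_of_hasDerivAt (c := 0) (fun t ht => hM t (hT t ht).2)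
      fun t ht => by
        have ht0 := (hT t ht).2
        have hQK := (lt_div_iff₀ hK).1 (hT t ht).1
        have hcoef : 0 ≤ -Lam - K * (Vb - V t) := by nlinarith [hM_nn t ht0]
        linarith [mul_nonneg hcoef (hM_nn t ht0), hM_growth t ht0]
  refine (hM_pos T (hT T le_rfl).2).not_ge (ge_of_tendsto hQ (eventually_atTop.2 ⟨T, ?_⟩))
  exact fun t ht => (hM_mono t ht).trans
    (le_add_of_nonneg_right (sub_nonneg.2 (hV_le t (hT t ht).2)))

theorem zero_state_instability_general
    (lam gam Lam K : ℝ)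
    (hgam : 0 < gam) (hLam : Lam < 0) (hK : 0 < K)
    (tau phi phi' : ℝ → ℝ)
    (htau_nn : ∀ x > 0, 0 ≤ tau x)
    (hphi_pos : ∀ x > 0, 0 < phi x)
    (hbound : ∀ x > 0, tau x * phi' x ≤ K * phi x)
    (V : ℝ → ℝ) (u : ℝ → ℝ → ℝ)
    (hV_nn : ∀ t ≥ 0, 0 ≤ V t)
    (hu_nn : ∀ t ≥ 0, ∀ x > 0, 0 ≤ u x t)
    (hint_uphi : ∀ t ≥ 0, IntegrableOn (fun x => u x t * phi x) (Ioi 0))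
    -- the monomer equation
    (hV_deriv : ∀ t ≥ 0, HasDerivAt V
        (lam - gam * V t - V t * ∫ x in Ioi (0:ℝ), tau x * u x t) t)
    -- the weak form of the polymer equation tested against φ
    (hM_deriv : ∀ t ≥ 0, HasDerivAt (fun s => ∫ x in Ioi (0:ℝ), u x s * phi x)
        (-Lam * (∫ x in Ioi (0:ℝ), u x t * phi x)
          + (V t - lam / gam) * ∫ x in Ioi (0:ℝ), tau x * phi' x * u x t) t)
    (hV0 : V 0 ≤ lam / gam)
    (hM0 : 0 < ∫ x in Ioi (0:ℝ), u x 0 * phi x) :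
    (∀ t ≥ 0, V t ≤ lam / gam) ∧
    ¬ Tendsto (fun t => (∫ x in Ioi (0:ℝ), u x t * phi x) + (lam / gam - V t))
        atTop (nhds 0) := by
  set M := fun t => ∫ x in Ioi (0:ℝ), u x t * phi x
  have hM_nn : ∀ t ≥ 0, 0 ≤ M t := fun t ht => setIntegral_nonneg measurableSet_Ioi
    fun x hx => mul_nonneg (hu_nn t ht x hx) (hphi_pos x hx).le
  have hV_le : ∀ t ≥ 0, V t ≤ lam / gam := monomer_le_steady_state hgam.ne' hV_nn
    (fun t ht => setIntegral_nonneg measurableSet_Ioi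
      fun x hx => mul_nonneg (htau_nn x hx) (hu_nn t ht x hx)) hV_deriv hV0
  have hJ_le : ∀ t ≥ 0, ∫ x in Ioi (0:ℝ), tau x * phi' x * u x t ≤ K * M t := fun t ht =>
    (setIntegral_le_of_le_of_nonneg measurableSet_Ioi ((hint_uphi t ht).const_mul K)
      (fun x hx => mul_nonneg hK.le (mul_nonneg (hu_nn t ht x hx) (hphi_pos x hx).le))
      (fun x hx => by nlinarith [mul_le_mul_of_nonneg_right (hbound x hx) (hu_nn t ht x hx)])
      ).trans_eq (integral_const_mul K _)
  exact ⟨hV_le, not_tendsto_mass_add_deficit_zero hLam hK hV_nn hV_le hM_nn hJ_le hM_deriv hM0⟩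

/-- **Instability of the disease-free steady state** (Theorem 3 of the paper): with
`V̄ = λ/γ`, adjoint eigenvalue `Λ̄ = Λ(V̄) < 0`, weight bound `τ φ' ≤ K φ`, and a
solution `(V, u)` of the prion system (in the weak, duality form) with `0 ≤ V(0) ≤ V̄`
and positive initial weighted polymer mass `M(0) > 0`, the monomer level stays below
`V̄`, and the nonnegative quantity `Q(t) = M(t) + (V̄ − V(t))` does not tend to `0` as
`t → ∞`: the zero steady state is unstable. Here `M(t) = ∫ u(x,t) φ(x) dx`. -/
theorem zero_state_instability
    (lam gam Lam K : ℝ)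
    (hlam : 0 < lam) (hgam : 0 < gam) (hLam : Lam < 0) (hK : 0 < K)
    (tau phi phi' : ℝ → ℝ)
    (htau_nn : ∀ x > 0, 0 ≤ tau x)
    (hphi_pos : ∀ x > 0, 0 < phi x)
    (hphi_deriv : ∀ x > 0, HasDerivAt phi (phi' x) x)
    (hbound : ∀ x > 0, tau x * phi' x ≤ K * phi x)
    (V : ℝ → ℝ) (u : ℝ → ℝ → ℝ)
    (hV_nn : ∀ t ≥ 0, 0 ≤ V t)
    (hu_nn : ∀ t ≥ 0, ∀ x > 0, 0 ≤ u x t)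
    (hint_uphi : ∀ t ≥ 0, IntegrableOn (fun x => u x t * phi x) (Ioi 0))
    (hint_tau : ∀ t ≥ 0, IntegrableOn (fun x => tau x * u x t) (Ioi 0))
    (hint_phi' : ∀ t ≥ 0, IntegrableOn (fun x => |phi' x| * tau x * u x t) (Ioi 0))
    -- the monomer equation
    (hV_deriv : ∀ t ≥ 0, HasDerivAt V
        (lam - gam * V t - V t * ∫ x in Ioi (0:ℝ), tau x * u x t) t)
    -- the weak form of the polymer equation tested against φ
    (hM_deriv : ∀ t ≥ 0, HasDerivAt (fun s => ∫ x in Ioi (0:ℝ), u x s * phi x)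
        (-Lam * (∫ x in Ioi (0:ℝ), u x t * phi x)
          + (V t - lam / gam) * ∫ x in Ioi (0:ℝ), tau x * phi' x * u x t) t)
    (hV0 : V 0 ≤ lam / gam)
    (hM0 : 0 < ∫ x in Ioi (0:ℝ), u x 0 * phi x) :
    (∀ t ≥ 0, V t ≤ lam / gam) ∧
    ¬ Tendsto (fun t => (∫ x in Ioi (0:ℝ), u x t * phi x) + (lam / gam - V t))
        atTop (nhds 0) :=
  zero_state_instability_general lam gam Lam K hgam hLam hK tau phi phi' htau_nn hphi_pos hbound V u
    hV_nn hu_nn hint_uphi hV_deriv hM_deriv hV0 hM0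
end

section
/- Lower-bound invariance lemma (core of the instability theorem). Let k₁, k₂ > 0 and let A, B : [0,∞) → [0,∞) be functions such that Q := A + B is differentiable on [0,∞) and satisfies Q'(t) ≥ k₁·(1 − k₂·B(t))·A(t) for all t ≥ 0. Then Q(t) ≥ min(Q(0), 1/k₂) for all t ≥ 0; in particular, if Q(0) > 0 then Q(t) is bounded away from 0 uniformly in t. -/
/-! Since `A ≥ 0`, while `Q = A + B < 1/k₂` we have `k₂ B < 1`, so `Q' ≥ 0`: `Q` cannot decrease while
it is below `1/k₂`, hence it never drops below `min (Q 0) (1/k₂)`. -/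

open Set

theorem le_of_hasDerivWithinAt_nonneg_of_lt {f f' : ℝ → ℝ} {a b m : ℝ} (hab : a ≤ b)
    (hf : ContinuousOn f (Icc a b))
    (hf' : ∀ x ∈ Ioo a b, HasDerivWithinAt f (f' x) (Ioo a b) x)
    (hf'₀ : ∀ x ∈ Ioo a b, f x < m → 0 ≤ f' x) (ha : m ≤ f a) : m ≤ f b := by
  by_contra! hb
  set S := Icc a b ∩ f ⁻¹' Ici m
  have hS_closed : IsClosed S := hf.preimage_isClosed_of_isClosed isClosed_Icc isClosed_Ici
  have hS_bdd : BddAbove S := ⟨b, fun x hx => hx.1.2⟩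
  -- `c` is the last time at which `f` is at least `m`
  set c := sSup S
  obtain ⟨⟨hac, hcb⟩, hfc⟩ : c ∈ S := hS_closed.csSup_mem ⟨a, ⟨le_rfl, hab⟩, ha⟩ hS_bdd
  have hbelow : ∀ x ∈ Ioc c b, f x < m := fun x ⟨hcx, hxb⟩ => by
    by_contra! hx
    exact (le_csSup hS_bdd ⟨⟨hac.trans hcx.le, hxb⟩, hx⟩).not_gt hcx
  have hmono : MonotoneOn f (Icc c b) := by
    have hsub : Ioo c b ⊆ Ioo a b := Ioo_subset_Ioo_left hac
    refine monotoneOn_of_hasDerivWithinAt_nonneg (convex_Icc c b)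
      (hf.mono (Icc_subset_Icc_left hac)) (f' := f') ?_ ?_ <;> rw [interior_Icc]
    · exact fun x hx => (hf' x (hsub hx)).mono hsub
    · exact fun x hx => hf'₀ x (hsub hx) (hbelow x (Ioo_subset_Ioc_self hx))
  have hcb' : c < b := hcb.lt_of_ne fun h => (h ▸ hfc).not_gt hb
  exact (hfc.trans (hmono ⟨le_rfl, hcb⟩ ⟨hcb, le_rfl⟩ hcb)).not_gt hb

theorem lower_bound_invariance_general
    (k1 k2 : ℝ) (hk1 : 0 < k1) (hk2 : 0 < k2)
    (A B Q' : ℝ → ℝ)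
    (hA_nn : ∀ t ≥ 0, 0 ≤ A t)
    (hQ_deriv : ∀ t ≥ 0, HasDerivAt (fun s => A s + B s) (Q' t) t)
    (hQ_ineq : ∀ t ≥ 0, k1 * (1 - k2 * B t) * A t ≤ Q' t) :
    (∀ t ≥ 0, min (A 0 + B 0) (1 / k2) ≤ A t + B t) ∧
    (0 < A 0 + B 0 → ∃ c > 0, ∀ t ≥ 0, c ≤ A t + B t) := by
  have hQ'_nonneg : ∀ t ≥ 0, A t + B t < min (A 0 + B 0) (1 / k2) → 0 ≤ Q' t := by
    intro t ht hlt
    have hkB : k2 * B t < 1 := by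
      have := (lt_min_iff.mp hlt).2
      rw [lt_div_iff₀ hk2] at this
      nlinarith [hA_nn t ht]
    exact (mul_nonneg (mul_nonneg hk1.le (by linarith)) (hA_nn t ht)).trans (hQ_ineq t ht)
  have hlower : ∀ t ≥ 0, min (A 0 + B 0) (1 / k2) ≤ A t + B t := fun t ht =>
    le_of_hasDerivWithinAt_nonneg_of_lt (f := fun s => A s + B s) ht
      (fun x hx => (hQ_deriv x hx.1).continuousAt.continuousWithinAt)
      (fun x hx => (hQ_deriv x hx.1.le).hasDerivWithinAt)
      (fun x hx => hQ'_nonneg x hx.1.le) (min_le_left _ _)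
  exact ⟨hlower, fun h0 => ⟨_, lt_min h0 (by positivity), hlower⟩⟩

/-- **Lower-bound invariance lemma** (core of the instability theorem): if
`A, B : [0,∞) → [0,∞)`, `Q = A + B` is differentiable and satisfies
`Q'(t) ≥ k₁ (1 − k₂ B(t)) A(t)`, then `Q(t) ≥ min(Q(0), 1/k₂)` for all `t ≥ 0`;
in particular if `Q(0) > 0` then `Q` is bounded away from `0` uniformly in `t`. -/
theorem lower_bound_invariance
    (k1 k2 : ℝ) (hk1 : 0 < k1) (hk2 : 0 < k2)
    (A B Q' : ℝ → ℝ)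
    (hA_nn : ∀ t ≥ 0, 0 ≤ A t)
    (hB_nn : ∀ t ≥ 0, 0 ≤ B t)
    (hQ_deriv : ∀ t ≥ 0, HasDerivAt (fun s => A s + B s) (Q' t) t)
    (hQ_ineq : ∀ t ≥ 0, k1 * (1 - k2 * B t) * A t ≤ Q' t) :
    (∀ t ≥ 0, min (A 0 + B 0) (1 / k2) ≤ A t + B t) ∧
    (0 < A 0 + B 0 → ∃ c > 0, ∀ t ≥ 0, c ≤ A t + B t) :=
  lower_bound_invariance_general k1 k2 hk1 hk2 A B Q' hA_nn hQ_deriv hQ_ineq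
end
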